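/- arXiv:2011.02003 — 11 statements merged into one kernel-verified Lean document; each statement's English description precedes it below -/
import Mathlib

section
/- Let Γ be a connected graph, v0 ∈ V(Γ), and μ♯ a polarization of degree k+1 on Γ. Let D be a (v0,μ♯)-quasistable divisor of degree k+1 on Γ, and let e0 ∈ E(Γ) be an edge with s(e0) ≠ t(e0). Define the degree-k polarization μ on Γ by μ(v) = μ♯(v) for v ≠ s(e0) and μ(s(e0)) = μ♯(s(e0)) − 1. Let D♭ be the divisor on the {e0}-subdivision Γ^{e0} given by D♭(v) = D(v) for v ∈ V(Γ) and D♭(v_{e0}) = −1. Let V̄ be an inclusion-wise maximal subset among the subsets of V(Γ^{e0}) ∖ {s(e0)} at which β_{D♭} (computed on Γ^{e0} with μ extended by 0 at v_{e0}) attains its minimum value, and set V = V̄ ∩ V(Γ). If D♭ is not (v0,μ)-quasistable on Γ^{e0}, then: t(e0) ∈ V̄ and v_{e0} ∈ V̄; and 0 ≤ β_D(V) ≤ 1, where β_D(V) is computed on Γ with the polarization μ♯; moreover β_D(V) > 0 if v0 ∈ V, and β_D(V) < 1 if v0 ∉ V. -/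
open Finset

/-- Number of edges with exactly one endpoint in `W`. -/
def edgeCut {V E : Type} [Fintype E] [DecidableEq V] (s t : E → V) (W : Finset V) : ℕ :=
  (Finset.univ.filter fun e : E =>
    (s e ∈ W ∧ t e ∉ W) ∨ (s e ∉ W ∧ t e ∈ W)).card

/-- `β_D(W) = deg(D|_W) − μ(W) + δ_W/2`. -/
noncomputable def betaInv {V E : Type} [Fintype E] [DecidableEq V]
    (s t : E → V) (mu : V → ℝ) (D : V → ℤ) (W : Finset V) : ℝ :=
  (∑ v ∈ W, (D v : ℝ)) - (∑ v ∈ W, mu v) + (edgeCut s t W : ℝ) / 2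

/-- `(v0,μ)`-quasistability of a divisor on a graph. -/
def Quasistable {V E : Type} [Fintype V] [Fintype E] [DecidableEq V]
    (s t : E → V) (mu : V → ℝ) (D : V → ℤ) (v0 : V) : Prop :=
  ∀ W : Finset V, W ⊂ Finset.univ →
    0 ≤ betaInv s t mu D W ∧ (v0 ∈ W → 0 < betaInv s t mu D W)

/-- Connectedness of the underlying undirected graph. -/
def GraphConnected {V E : Type} (s t : E → V) : Prop :=
  ∀ v w : V, Relation.ReflTransGen
    (fun a b => ∃ e : E, (s e = a ∧ t e = b) ∨ (s e = b ∧ t e = a)) v w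

/-- Source map of the `F`-subdivision of a graph: each edge `e ∈ F` gets one
exceptional vertex in its interior. -/
def subdivS {V E : Type} (s : E → V) (F : Finset E) :
    E ⊕ {e : E // e ∈ F} → V ⊕ {e : E // e ∈ F} :=
  Sum.elim (fun e => Sum.inl (s e)) fun x => Sum.inr x

/-- Target map of the `F`-subdivision of a graph. -/
def subdivT {V E : Type} [DecidableEq E] (t : E → V) (F : Finset E) :
    E ⊕ {e : E // e ∈ F} → V ⊕ {e : E // e ∈ F} :=
  Sum.elim (fun e => if h : e ∈ F then Sum.inr ⟨e, h⟩ else Sum.inl (t e))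
    fun x => Sum.inl (t x.1)

-- lemmas on top of base
set_option linter.unusedSectionVars false
namespace DegOneAux

variable {V E : Type} [Fintype V] [Fintype E] [DecidableEq V] [DecidableEq E]

/-- The unique exceptional vertex. -/
def x0 (e0 : E) : {e : E // e ∈ ({e0} : Finset E)} := ⟨e0, Finset.mem_singleton_self e0⟩

lemma eq_x0 (e0 : E) (x : {e : E // e ∈ ({e0} : Finset E)}) : x = x0 e0 :=
  Subtype.ext (Finset.mem_singleton.mp x.2)

/-- Lift a subset of `V` to a subset of the subdivision, optionally adding the
exceptional vertex. -/
def liftSet (e0 : E) (W : Finset V) (b : Bool) :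
    Finset (V ⊕ {e : E // e ∈ ({e0} : Finset E)}) :=
  W.image Sum.inl ∪ (if b then {Sum.inr (x0 e0)} else ∅)

@[simp] lemma mem_inl_liftSet (e0 : E) (W : Finset V) (b : Bool) (v : V) :
    Sum.inl v ∈ liftSet e0 W b ↔ v ∈ W := by
  cases b <;> simp [liftSet]

@[simp] lemma mem_inr_liftSet (e0 : E) (W : Finset V) (b : Bool)
    (x : {e : E // e ∈ ({e0} : Finset E)}) :
    Sum.inr x ∈ liftSet e0 W b ↔ b = true := by
  obtain rfl := eq_x0 e0 x
  cases b <;> simp [liftSet]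

lemma liftSet_decomp (e0 : E) (W' : Finset (V ⊕ {e : E // e ∈ ({e0} : Finset E)})) :
    W' = liftSet e0 (Finset.univ.filter fun v => Sum.inl v ∈ W')
      (decide (Sum.inr (x0 e0) ∈ W')) := by
  ext z
  rcases z with v | x
  · simp
  · obtain rfl := eq_x0 e0 x
    simp

lemma liftSet_univ_true (e0 : E) :
    liftSet e0 (Finset.univ : Finset V) true = Finset.univ := by
  ext z
  rcases z with v | x
  · simp
  · obtain rfl := eq_x0 e0 x
    simp

lemma sum_liftSet (e0 : E) (W : Finset V) (b : Bool) (f : V → ℝ) (c : ℝ) :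
    ∑ z ∈ liftSet e0 W b, Sum.elim f (fun _ => c) z
      = (∑ v ∈ W, f v) + (if b then c else 0) := by
  have hdisj : Disjoint (W.image Sum.inl)
      ((if b then {Sum.inr (x0 e0)} else ∅ : Finset (V ⊕ {e : E // e ∈ ({e0} : Finset E)}))) := by
    cases b <;> simp [Finset.disjoint_left]
  rw [liftSet, Finset.sum_union hdisj, Finset.sum_image (by simp)]
  cases b <;> simp

end DegOneAux

namespace DegOneAux
set_option linter.unusedSectionVars false

variable {V E : Type} [Fintype V] [Fintype E] [DecidableEq V] [DecidableEq E]

lemma cut_lift (s t : E → V) (e0 : E) (W : Finset V) (b : Bool) :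
    edgeCut (subdivS s {e0}) (subdivT t {e0}) (liftSet e0 W b)
      + (if (s e0 ∈ W ∧ t e0 ∉ W) ∨ (s e0 ∉ W ∧ t e0 ∈ W) then 1 else 0)
    = edgeCut s t W
      + (if (s e0 ∈ W ∧ b = false) ∨ (s e0 ∉ W ∧ b = true) then 1 else 0)
      + (if (b = true ∧ t e0 ∉ W) ∨ (b = false ∧ t e0 ∈ W) then 1 else 0) := by
  classical
  rw [edgeCut, edgeCut, Finset.card_filter, Finset.card_filter]
  rw [Fintype.sum_sum_type]
  have hX : ∀ f : {e : E // e ∈ ({e0} : Finset E)} → ℕ,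
      ∑ x : {e : E // e ∈ ({e0} : Finset E)}, f x = f (x0 e0) := by
    intro f
    rw [Finset.sum_eq_single (x0 e0)]
    · intro x _ hx; exact absurd (eq_x0 e0 x) hx
    · intro h; exact absurd (Finset.mem_univ _) h
  rw [hX]
  have h1 : ∀ g : E → ℕ, ∑ e : E, g e = g e0 + ∑ e ∈ Finset.univ.erase e0, g e := by
    intro g
    rw [Finset.add_sum_erase _ _ (Finset.mem_univ e0)]
  rw [h1, h1 (fun e => if (s e ∈ W ∧ t e ∉ W) ∨ (s e ∉ W ∧ t e ∈ W) then 1 else 0)]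
  have h2 : ∀ e ∈ Finset.univ.erase e0,
      (if (subdivS s {e0} (Sum.inl e) ∈ liftSet e0 W b ∧
            subdivT t {e0} (Sum.inl e) ∉ liftSet e0 W b) ∨
          (subdivS s {e0} (Sum.inl e) ∉ liftSet e0 W b ∧
            subdivT t {e0} (Sum.inl e) ∈ liftSet e0 W b) then 1 else 0)
      = (if (s e ∈ W ∧ t e ∉ W) ∨ (s e ∉ W ∧ t e ∈ W) then 1 else 0) := by
    intro e he
    have hne : e ≠ e0 := (Finset.mem_erase.mp he).1
    have hne' : e ∉ ({e0} : Finset E) := by simp [hne]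
    simp [subdivS, subdivT, hne', hne]
  rw [Finset.sum_congr rfl h2]
  have hs0 : subdivS s {e0} (Sum.inl e0) = Sum.inl (s e0) := rfl
  have ht0 : subdivT t {e0} (Sum.inl e0) = Sum.inr (x0 e0) := by
    simp [subdivT, x0]
  have hsx : subdivS s {e0} (Sum.inr (x0 e0)) = Sum.inr (x0 e0) := rfl
  have htx : subdivT t {e0} (Sum.inr (x0 e0)) = Sum.inl (t e0) := rfl
  rw [hs0, ht0, hsx, htx]
  by_cases hs : s e0 ∈ W <;> by_cases ht : t e0 ∈ W <;> cases b <;>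
    simp [hs, ht] <;> omega

end DegOneAux

namespace DegOneAux
set_option linter.unusedSectionVars false

variable {V E : Type} [Fintype V] [Fintype E] [DecidableEq V] [DecidableEq E]

lemma beta_lift (s t : E → V) (e0 : E) (mu : V → ℝ) (D : V → ℤ) (W : Finset V) (b : Bool) :
    betaInv (subdivS s {e0}) (subdivT t {e0}) (Sum.elim mu fun _ => 0)
        (Sum.elim D fun _ => -1) (liftSet e0 W b)
      = betaInv s t mu D W +
        (if b then (if s e0 ∈ W ∨ t e0 ∈ W then (-1 : ℝ) else 0)
         else (if s e0 ∈ W ∧ t e0 ∈ W then 1 else 0)) := by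
  classical
  rw [betaInv, betaInv]
  have hD : ∑ z ∈ liftSet e0 W b, ((Sum.elim D fun _ => -1) z : ℝ)
      = (∑ v ∈ W, (D v : ℝ)) + (if b then (-1 : ℝ) else 0) := by
    rw [← sum_liftSet e0 W b (fun v => (D v : ℝ)) (-1)]
    refine Finset.sum_congr rfl fun z _ => ?_
    rcases z with v | x <;> simp
  have hmu : ∑ z ∈ liftSet e0 W b, (Sum.elim mu fun _ => (0:ℝ)) z
      = ∑ v ∈ W, mu v := by
    rw [sum_liftSet e0 W b mu 0]
    cases b <;> simp
  rw [hD, hmu]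
  have hcut := cut_lift s t e0 W b
  by_cases hs : s e0 ∈ W <;> by_cases ht : t e0 ∈ W <;> cases b <;>
    simp only [hs, ht, and_true, and_false, true_and, false_and, not_true, not_false_iff,
      or_true, true_or, or_false, false_or, and_self, not_true_eq_false, not_false_eq_true,
      if_true, if_false, ite_true, ite_false] at hcut ⊢ <;>
  · have := congrArg (fun n : ℕ => (n : ℝ)) hcut
    push_cast at this
    push_cast
    linarith

lemma beta_shift (s t : E → V) (e0 : E) (mu musharp : V → ℝ) (D : V → ℤ)
    (hmu : ∀ v, mu v = if v = s e0 then musharp v - 1 else musharp v) (W : Finset V) :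
    betaInv s t mu D W = betaInv s t musharp D W + (if s e0 ∈ W then 1 else 0) := by
  rw [betaInv, betaInv]
  have : ∑ v ∈ W, mu v = ∑ v ∈ W, musharp v - (if s e0 ∈ W then (1:ℝ) else 0) := by
    have h1 : ∀ v ∈ W, mu v = musharp v - (if v = s e0 then (1:ℝ) else 0) := by
      intro v _
      rw [hmu v]
      split_ifs <;> ring
    rw [Finset.sum_congr rfl h1, Finset.sum_sub_distrib,
      Finset.sum_ite_eq' W (s e0) (fun _ => (1:ℝ))]
  rw [this]
  ring

lemma edgeCut_submodular (s t : E → V) (A B : Finset V) :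
    edgeCut s t (A ∪ B) + edgeCut s t (A ∩ B) ≤ edgeCut s t A + edgeCut s t B := by
  classical
  rw [edgeCut, edgeCut, edgeCut, edgeCut, Finset.card_filter, Finset.card_filter,
    Finset.card_filter, Finset.card_filter, ← Finset.sum_add_distrib, ← Finset.sum_add_distrib]
  refine Finset.sum_le_sum fun e _ => ?_
  by_cases h1 : s e ∈ A <;> by_cases h2 : s e ∈ B <;> by_cases h3 : t e ∈ A <;>
    by_cases h4 : t e ∈ B <;>
    simp [Finset.mem_union, Finset.mem_inter, h1, h2, h3, h4]

lemma betaInv_submodular (s t : E → V) (mu : V → ℝ) (D : V → ℤ) (A B : Finset V) :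
    betaInv s t mu D (A ∪ B) + betaInv s t mu D (A ∩ B)
      ≤ betaInv s t mu D A + betaInv s t mu D B := by
  rw [betaInv, betaInv, betaInv, betaInv]
  have h1 := Finset.sum_union_inter (s₁ := A) (s₂ := B) (f := fun v => ((D v : ℝ)))
  have h2 := Finset.sum_union_inter (s₁ := A) (s₂ := B) (f := mu)
  have h3 := edgeCut_submodular s t A B
  have h3' : (edgeCut s t (A ∪ B) : ℝ) + edgeCut s t (A ∩ B)
      ≤ (edgeCut s t A : ℝ) + edgeCut s t B := by exact_mod_cast h3
  linarith

lemma beta_empty (s t : E → V) (mu : V → ℝ) (D : V → ℤ) :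
    betaInv s t mu D ∅ = 0 := by
  simp [betaInv, edgeCut]

end DegOneAux

set_option linter.unusedVariables false in
open DegOneAux in
theorem degree_one_minimizer_properties
    {V E : Type} [Fintype V] [Fintype E] [DecidableEq V] [DecidableEq E]
    (s t : E → V) (hconn : GraphConnected s t)
    (v0 : V) (k : ℤ)
    (musharp : V → ℝ) (hmusharp : ∑ v, musharp v = (k : ℝ) + 1)
    (D : V → ℤ) (hDdeg : ∑ v, D v = k + 1)
    (hDqs : Quasistable s t musharp D v0)
    (e0 : E) (he0 : s e0 ≠ t e0)
    (mu : V → ℝ) (hmu : ∀ v, mu v = if v = s e0 then musharp v - 1 else musharp v)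
    (Dflat : V ⊕ {e : E // e ∈ ({e0} : Finset E)} → ℤ)
    (hDflat : Dflat = Sum.elim D fun _ => -1)
    (Vbar : Finset (V ⊕ {e : E // e ∈ ({e0} : Finset E)}))
    (hVbarSub : Vbar ⊆ Finset.univ \ {Sum.inl (s e0)})
    (hVbarMin : ∀ W ⊆ (Finset.univ \ {Sum.inl (s e0)} :
        Finset (V ⊕ {e : E // e ∈ ({e0} : Finset E)})),
      betaInv (subdivS s {e0}) (subdivT t {e0}) (Sum.elim mu fun _ => 0) Dflat Vbar
        ≤ betaInv (subdivS s {e0}) (subdivT t {e0}) (Sum.elim mu fun _ => 0) Dflat W)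
    (hVbarMax : ∀ W ⊆ (Finset.univ \ {Sum.inl (s e0)} :
        Finset (V ⊕ {e : E // e ∈ ({e0} : Finset E)})),
      betaInv (subdivS s {e0}) (subdivT t {e0}) (Sum.elim mu fun _ => 0) Dflat W
        = betaInv (subdivS s {e0}) (subdivT t {e0}) (Sum.elim mu fun _ => 0) Dflat Vbar →
      Vbar ⊆ W → W = Vbar)
    (Vset : Finset V) (hVset : Vset = Finset.univ.filter fun v => Sum.inl v ∈ Vbar)
    (hnotqs : ¬ Quasistable (subdivS s {e0}) (subdivT t {e0})
      (Sum.elim mu fun _ => 0) Dflat (Sum.inl v0)) :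
    Sum.inl (t e0) ∈ Vbar ∧
    Sum.inr (⟨e0, Finset.mem_singleton_self e0⟩ :
      {e : E // e ∈ ({e0} : Finset E)}) ∈ Vbar ∧
    0 ≤ betaInv s t musharp D Vset ∧
    betaInv s t musharp D Vset ≤ 1 ∧
    (v0 ∈ Vset → 0 < betaInv s t musharp D Vset) ∧
    (v0 ∉ Vset → betaInv s t musharp D Vset < 1) := by
  classical
  subst hDflat
  have hsV : s e0 ∉ Vset := by
    intro h
    rw [hVset] at h
    have := hVbarSub (Finset.mem_filter.mp h).2
    simp at this
  have hmemV : ∀ v : V, v ∈ Vset ↔ Sum.inl v ∈ Vbar := by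
    intro v; rw [hVset]; simp
  have hdec : Vbar = liftSet e0 Vset (decide (Sum.inr (x0 e0) ∈ Vbar)) := by
    rw [hVset]; exact liftSet_decomp e0 Vbar
  have hq : ∀ W : Finset V, s e0 ∉ W →
      0 ≤ betaInv s t musharp D W ∧ (v0 ∈ W → 0 < betaInv s t musharp D W) := by
    intro W hs
    refine hDqs W (Finset.ssubset_univ_iff.mpr fun h => hs ?_)
    rw [h]; exact Finset.mem_univ _
  have hLB : ∀ (W : Finset V) (b : Bool), s e0 ∉ W →
      betaInv (subdivS s {e0}) (subdivT t {e0}) (Sum.elim mu fun _ => 0)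
        (Sum.elim D fun _ => -1) (liftSet e0 W b)
      = betaInv s t musharp D W
        + (if b then (if t e0 ∈ W then (-1 : ℝ) else 0) else 0) := by
    intro W b hs
    rw [beta_lift, beta_shift s t e0 mu musharp D hmu]
    cases b <;> simp [hs]
  have hsub : ∀ (W : Finset V) (b : Bool), s e0 ∉ W →
      liftSet e0 W b ⊆ Finset.univ \ {Sum.inl (s e0)} := by
    intro W b hs
    refine Finset.subset_sdiff.mpr ⟨Finset.subset_univ _, ?_⟩
    rw [Finset.disjoint_singleton_right]
    simp [hs]
  have hβe : betaInv s t musharp D ∅ = 0 := beta_empty s t musharp D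
  have hcutu : edgeCut s t (Finset.univ : Finset V) = 0 := by simp [edgeCut]
  have hsumD : ∑ v, ((D v : ℝ)) = (k : ℝ) + 1 := by
    exact_mod_cast congrArg (fun z : ℤ => (z : ℝ)) hDdeg
  have hβu : betaInv s t musharp D Finset.univ = 0 := by
    rw [betaInv, hcutu, hsumD, hmusharp]; norm_num
  -- extraction of a failing set
  simp only [Quasistable] at hnotqs
  push_neg at hnotqs
  obtain ⟨W', hW'p, hW'⟩ := hnotqs
  have hfail : ∃ Wf : Finset V, s e0 ∉ Wf ∧ t e0 ∈ Wf ∧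
      (betaInv s t musharp D Wf < 1 ∨ (v0 ∈ Wf ∧ betaInv s t musharp D Wf ≤ 1)) := by
    obtain ⟨Wc, bc, hdc⟩ : ∃ Wc bc, W' = liftSet e0 Wc bc :=
      ⟨_, _, liftSet_decomp e0 W'⟩
    have hval : betaInv (subdivS s {e0}) (subdivT t {e0}) (Sum.elim mu fun _ => 0)
        (Sum.elim D fun _ => -1) W'
        = betaInv s t musharp D Wc + (if s e0 ∈ Wc then 1 else 0)
          + (if bc then (if s e0 ∈ Wc ∨ t e0 ∈ Wc then (-1:ℝ) else 0)
             else (if s e0 ∈ Wc ∧ t e0 ∈ Wc then 1 else 0)) := by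
      rw [hdc, beta_lift, beta_shift s t e0 mu musharp D hmu]
    have hv0mem : Sum.inl v0 ∈ W' ↔ v0 ∈ Wc := by rw [hdc]; simp
    rcases eq_or_ne Wc Finset.univ with hu | hu
    · have hcs : s e0 ∈ Wc := by rw [hu]; exact Finset.mem_univ _
      have hct : t e0 ∈ Wc := by rw [hu]; exact Finset.mem_univ _
      by_cases hbc : bc = true
      · exfalso
        have : W' = Finset.univ := by rw [hdc, hu, hbc]; exact liftSet_univ_true e0
        exact absurd this hW'p.ne
      · exfalso
        simp [hcs, hct, hbc] at hval
        have h0 : betaInv s t musharp D Wc = 0 := by rw [hu]; exact hβu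
        obtain ⟨hv, hle⟩ := hW' (by linarith)
        linarith
    · have hβ := hDqs Wc (Finset.ssubset_univ_iff.mpr hu)
      by_cases hcs : s e0 ∈ Wc
      · exfalso
        by_cases hct : t e0 ∈ Wc <;> by_cases hbc : bc = true <;>
          simp [hcs, hct, hbc] at hval <;>
        · obtain ⟨hv, hle⟩ := hW' (by linarith [hβ.1])
          exact absurd (hβ.2 (hv0mem.mp hv)) (by linarith)
      · by_cases hct : t e0 ∈ Wc
        · by_cases hbc : bc = true
          · simp [hcs, hct, hbc] at hval
            refine ⟨Wc, hcs, hct, ?_⟩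
            rcases lt_or_ge (betaInv (subdivS s {e0}) (subdivT t {e0})
              (Sum.elim mu fun _ => 0) (Sum.elim D fun _ => -1) W') 0 with h | h
            · left; linarith
            · obtain ⟨hv, hle⟩ := hW' h
              right; exact ⟨hv0mem.mp hv, by linarith⟩
          · exfalso
            simp [hcs, hct, hbc] at hval
            obtain ⟨hv, hle⟩ := hW' (by linarith [hβ.1])
            exact absurd (hβ.2 (hv0mem.mp hv)) (by linarith)
        · exfalso
          by_cases hbc : bc = true <;> simp [hcs, hct, hbc] at hval <;>
          · obtain ⟨hv, hle⟩ := hW' (by linarith [hβ.1])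
            exact absurd (hβ.2 (hv0mem.mp hv)) (by linarith)
  -- the minimum is ≤ 0
  have hm0 : betaInv (subdivS s {e0}) (subdivT t {e0}) (Sum.elim mu fun _ => 0)
      (Sum.elim D fun _ => -1) Vbar ≤ 0 := by
    have h1 := hVbarMin (liftSet e0 ∅ true) (hsub ∅ true (by simp))
    rw [hLB ∅ true (by simp)] at h1
    simpa [hβe] using h1
  -- every minimizer is contained in Vbar
  have hminC : ∀ M ⊆ (Finset.univ \ {Sum.inl (s e0)} :
      Finset (V ⊕ {e : E // e ∈ ({e0} : Finset E)})),
      betaInv (subdivS s {e0}) (subdivT t {e0}) (Sum.elim mu fun _ => 0)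
        (Sum.elim D fun _ => -1) M
      = betaInv (subdivS s {e0}) (subdivT t {e0}) (Sum.elim mu fun _ => 0)
        (Sum.elim D fun _ => -1) Vbar → M ⊆ Vbar := by
    intro M hM hMv
    have hU : Vbar ∪ M ⊆ Finset.univ \ {Sum.inl (s e0)} :=
      Finset.union_subset hVbarSub hM
    have hI : Vbar ∩ M ⊆ Finset.univ \ {Sum.inl (s e0)} :=
      fun z hz => hVbarSub (Finset.mem_inter.mp hz).1
    have h1 := hVbarMin _ hU
    have h2 := hVbarMin _ hI
    have h3 := betaInv_submodular (subdivS s {e0}) (subdivT t {e0})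
      (Sum.elim mu fun _ => 0) (Sum.elim D fun _ => -1) Vbar M
    have h4 : betaInv (subdivS s {e0}) (subdivT t {e0}) (Sum.elim mu fun _ => 0)
        (Sum.elim D fun _ => -1) (Vbar ∪ M)
      = betaInv (subdivS s {e0}) (subdivT t {e0}) (Sum.elim mu fun _ => 0)
        (Sum.elim D fun _ => -1) Vbar := by linarith
    have h5 := hVbarMax (Vbar ∪ M) hU h4 Finset.subset_union_left
    intro z hz
    rw [← h5]; exact Finset.mem_union_right _ hz
  -- value of Vbar
  have hVv := hLB Vset (decide (Sum.inr (x0 e0) ∈ Vbar)) hsV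
  rw [← hdec] at hVv
  have h0V := hq Vset hsV
  -- main dichotomy
  have hmain : Sum.inr (x0 e0) ∈ Vbar ∧ t e0 ∈ Vset ∧
      betaInv s t musharp D Vset
        = betaInv (subdivS s {e0}) (subdivT t {e0}) (Sum.elim mu fun _ => 0)
            (Sum.elim D fun _ => -1) Vbar + 1 ∧
      (betaInv (subdivS s {e0}) (subdivT t {e0}) (Sum.elim mu fun _ => 0)
            (Sum.elim D fun _ => -1) Vbar = 0 → v0 ∈ Vset) := by
    rcases hm0.lt_or_eq with hlt | heq
    · by_cases hb : decide (Sum.inr (x0 e0) ∈ Vbar) = true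
      · by_cases ht : t e0 ∈ Vset
        · refine ⟨of_decide_eq_true hb, ht, ?_, fun h => absurd h hlt.ne⟩
          simp [hb, ht] at hVv
          linarith
        · exfalso; simp [hb, ht] at hVv; linarith [h0V.1]
      · exfalso; simp [hb] at hVv; linarith [h0V.1]
    · obtain ⟨Wf, hfs, hft, hfd⟩ := hfail
      have hMval := hLB Wf true hfs
      simp only [hft, if_true, ite_true] at hMval
      have hge := hVbarMin _ (hsub Wf true hfs)
      rw [hMval] at hge
      have h1f : 1 ≤ betaInv s t musharp D Wf := by
        rw [heq] at hge; linarith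
      rcases hfd with h | ⟨hv0f, hle1⟩
      · exact absurd h (by linarith)
      · have hMeq : betaInv (subdivS s {e0}) (subdivT t {e0}) (Sum.elim mu fun _ => 0)
            (Sum.elim D fun _ => -1) (liftSet e0 Wf true)
          = betaInv (subdivS s {e0}) (subdivT t {e0}) (Sum.elim mu fun _ => 0)
            (Sum.elim D fun _ => -1) Vbar := by
          rw [hMval, heq]; linarith
        have hMC := hminC _ (hsub Wf true hfs) hMeq
        have hxin : Sum.inr (x0 e0) ∈ Vbar := hMC (by simp)
        have htin : t e0 ∈ Vset := (hmemV _).mpr (hMC (by simp [hft]))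
        have hv0in : v0 ∈ Vset := (hmemV _).mpr (hMC (by simp [hv0f]))
        refine ⟨hxin, htin, ?_, fun _ => hv0in⟩
        have hb : decide (Sum.inr (x0 e0) ∈ Vbar) = true := decide_eq_true hxin
        simp [hb, htin] at hVv
        linarith
  obtain ⟨hxin, htV, hval2, hzero⟩ := hmain
  refine ⟨(hmemV (t e0)).mp htV, hxin, h0V.1, by linarith, h0V.2, ?_⟩
  intro hv0n
  by_contra h
  push_neg at h
  have hz : betaInv (subdivS s {e0}) (subdivT t {e0}) (Sum.elim mu fun _ => 0)
      (Sum.elim D fun _ => -1) Vbar = 0 := by linarith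
  exact hv0n (hzero hz)
end

section
/- Let Γ be a connected graph, v0 ∈ V(Γ), and μ♯ a polarization of degree k+1 on Γ. Let D be a (v0,μ♯)-quasistable divisor of degree k+1 on Γ, and let e0 ∈ E(Γ) be an edge with s(e0) ≠ t(e0). Define the degree-k polarization μ on Γ by μ(v) = μ♯(v) for v ≠ s(e0) and μ(s(e0)) = μ♯(s(e0)) − 1. Let D♭ be the divisor on the {e0}-subdivision Γ^{e0} given by D♭(v) = D(v) for v ∈ V(Γ) and D♭(v_{e0}) = −1. Let V̄ be an inclusion-wise maximal subset among the subsets of V(Γ^{e0}) ∖ {s(e0)} at which β_{D♭} (computed on Γ^{e0} with μ extended by 0 at v_{e0}) attains its minimum value, and set V = V̄ ∩ V(Γ). Let E(V,V^c) be the set of edges of Γ with one endpoint in V and the other in V^c = V(Γ)∖V, and set Ẽ = E(V,V^c) ∖ {e0}. Let Γ_Ẽ be the graph obtained from Γ by deleting the edges in Ẽ, let μ_Ẽ be the polarization on Γ_Ẽ given by μ_Ẽ(v) = μ(v) + val_Ẽ(v)/2 (where val_Ẽ(v) is the number of edges of Ẽ incident to v), and let D̃_Ẽ be the divisor on Γ_Ẽ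 given by D̃_Ẽ(s(e0)) = D(s(e0)) − 1, D̃_Ẽ(v) = D(v) + val_Ẽ(v) for v ∈ V, and D̃_Ẽ(v) = D(v) otherwise. Then: (a) for every W₁ ⊆ V, β_{D̃_Ẽ}(W₁) computed on Γ_Ẽ with μ_Ẽ equals β_D(W₁) computed on Γ with μ♯; and (b) for every W₂ ⊆ V(Γ)∖V, β_{D̃_Ẽ}(W₂) computed on Γ_Ẽ with μ_Ẽ equals β_D(W₂) − val_Ẽ(W₂), where β_D(W₂) is computed on Γ with μ♯. -/
open Finset

/-- Number of edges of `F` incident to `v` (loops counted twice). -/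
def valEdges {V E : Type} [DecidableEq V] (s t : E → V) (F : Finset E) (v : V) : ℕ :=
  (F.filter fun e => s e = v).card + (F.filter fun e => t e = v).card

lemma edgeCut_split {V E : Type} [Fintype E] [DecidableEq V] [DecidableEq E]
    (s t : E → V) (F : Finset E) (W : Finset V)
    (hW : ∀ e ∈ F, ¬(s e ∈ W ∧ t e ∈ W)) :
    edgeCut s t W
      = edgeCut (fun x : {e : E // e ∉ F} => s x.1) (fun x => t x.1) W
        + ∑ v ∈ W, valEdges s t F v := by
  classical
  have hval : ∑ v ∈ W, valEdges s t F v
      = ∑ e ∈ F, ((if s e ∈ W then 1 else 0) + (if t e ∈ W then 1 else 0)) := by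
    unfold valEdges
    simp only [Finset.card_filter, Finset.sum_add_distrib]
    rw [Finset.sum_comm, Finset.sum_comm (s := W)]
    congr 1 <;>
    · apply Finset.sum_congr rfl
      intro e _
      rw [Finset.sum_ite_eq W _ (fun _ => 1)]
  have hcut : edgeCut s t W
      = ∑ e : E, if (s e ∈ W ∧ t e ∉ W) ∨ (s e ∉ W ∧ t e ∈ W) then 1 else 0 := by
    rw [edgeCut, Finset.card_filter]
  rw [hcut, hval, add_comm (edgeCut _ _ _)]
  rw [← Finset.sum_filter_add_sum_filter_not Finset.univ (· ∈ F)]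
  rw [Finset.filter_univ_mem F]
  congr 1
  · apply Finset.sum_congr rfl
    intro e he
    by_cases hs : s e ∈ W <;> by_cases ht : t e ∈ W
    · exact absurd ⟨hs, ht⟩ (hW e he)
    all_goals simp [hs, ht]
  · rw [Finset.sum_subtype (p := fun e => e ∉ F) _ (by simp)
      (fun e => if (s e ∈ W ∧ t e ∉ W) ∨ (s e ∉ W ∧ t e ∈ W) then 1 else 0)]
    rw [edgeCut, Finset.card_filter]

theorem beta_on_edge_deleted_graph
    {V E : Type} [Fintype V] [Fintype E] [DecidableEq V] [DecidableEq E]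
    (s t : E → V) (hconn : GraphConnected s t)
    (v0 : V) (k : ℤ)
    (musharp : V → ℝ) (hmusharp : ∑ v, musharp v = (k : ℝ) + 1)
    (D : V → ℤ) (hDdeg : ∑ v, D v = k + 1)
    (hDqs : Quasistable s t musharp D v0)
    (e0 : E) (he0 : s e0 ≠ t e0)
    (mu : V → ℝ) (hmu : ∀ v, mu v = if v = s e0 then musharp v - 1 else musharp v)
    (Dflat : V ⊕ {e : E // e ∈ ({e0} : Finset E)} → ℤ)
    (hDflat : Dflat = Sum.elim D fun _ => -1)
    (Vbar : Finset (V ⊕ {e : E // e ∈ ({e0} : Finset E)}))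
    (hVbarSub : Vbar ⊆ Finset.univ \ {Sum.inl (s e0)})
    (hVbarMin : ∀ W ⊆ (Finset.univ \ {Sum.inl (s e0)} :
        Finset (V ⊕ {e : E // e ∈ ({e0} : Finset E)})),
      betaInv (subdivS s {e0}) (subdivT t {e0}) (Sum.elim mu fun _ => 0) Dflat Vbar
        ≤ betaInv (subdivS s {e0}) (subdivT t {e0}) (Sum.elim mu fun _ => 0) Dflat W)
    (hVbarMax : ∀ W ⊆ (Finset.univ \ {Sum.inl (s e0)} :
        Finset (V ⊕ {e : E // e ∈ ({e0} : Finset E)})),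
      betaInv (subdivS s {e0}) (subdivT t {e0}) (Sum.elim mu fun _ => 0) Dflat W
        = betaInv (subdivS s {e0}) (subdivT t {e0}) (Sum.elim mu fun _ => 0) Dflat Vbar →
      Vbar ⊆ W → W = Vbar)
    (Vset : Finset V) (hVset : Vset = Finset.univ.filter fun v => Sum.inl v ∈ Vbar)
    (Etil : Finset E)
    (hEtil : Etil = (Finset.univ.filter fun e : E =>
      (s e ∈ Vset ∧ t e ∉ Vset) ∨ (s e ∉ Vset ∧ t e ∈ Vset)).erase e0)
    (muE : V → ℝ) (hmuE : ∀ v, muE v = mu v + (valEdges s t Etil v : ℝ) / 2)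
    (DE : V → ℤ)
    (hDE : ∀ v, DE v =
      if v = s e0 then D v - 1
      else if v ∈ Vset then D v + (valEdges s t Etil v : ℤ)
      else D v) :
    (∀ W₁ ⊆ Vset,
      betaInv (fun x : {e : E // e ∉ Etil} => s x.1) (fun x => t x.1) muE DE W₁
        = betaInv s t musharp D W₁) ∧
    (∀ W₂ ⊆ Finset.univ \ Vset,
      betaInv (fun x : {e : E // e ∉ Etil} => s x.1) (fun x => t x.1) muE DE W₂
        = betaInv s t musharp D W₂ - ∑ v ∈ W₂, (valEdges s t Etil v : ℝ)) := by
  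
  classical
  have hse0 : s e0 ∉ Vset := by
    intro h
    rw [hVset, Finset.mem_filter] at h
    have := hVbarSub h.2
    simp at this
  have hEtilOne : ∀ e ∈ Etil,
      (s e ∈ Vset ∧ t e ∉ Vset) ∨ (s e ∉ Vset ∧ t e ∈ Vset) := by
    intro e he
    rw [hEtil] at he
    exact (Finset.mem_filter.mp (Finset.mem_of_mem_erase he)).2
  constructor
  · intro W hWsub
    have hnb : ∀ e ∈ Etil, ¬(s e ∈ W ∧ t e ∈ W) := by
      rintro e he ⟨hs, ht⟩
      rcases hEtilOne e he with ⟨-, h⟩ | ⟨h, -⟩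
      exacts [h (hWsub ht), h (hWsub hs)]
    have hc : (edgeCut s t W : ℝ)
        = (edgeCut (fun x : {e : E // e ∉ Etil} => s x.1) (fun x => t x.1) W : ℝ)
          + ∑ v ∈ W, (valEdges s t Etil v : ℝ) := by
      rw [edgeCut_split s t Etil W hnb]
      push_cast
      ring
    have hDm : ∀ v ∈ W, (DE v : ℝ) - muE v
        = (D v : ℝ) - musharp v + (valEdges s t Etil v : ℝ) / 2 := by
      intro v hv
      have hvV : v ∈ Vset := hWsub hv
      have hvne : v ≠ s e0 := fun h => hse0 (h ▸ hvV)
      rw [hDE v, if_neg hvne, if_pos hvV, hmuE v, hmu v, if_neg hvne]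
      push_cast
      ring
    unfold betaInv
    rw [← Finset.sum_sub_distrib, ← Finset.sum_sub_distrib,
      Finset.sum_congr rfl hDm, Finset.sum_add_distrib, ← Finset.sum_div, hc]
    ring
  · intro W hWsub
    have hWV : ∀ v ∈ W, v ∉ Vset := by
      intro v hv
      exact (Finset.mem_sdiff.mp (hWsub hv)).2
    have hnb : ∀ e ∈ Etil, ¬(s e ∈ W ∧ t e ∈ W) := by
      rintro e he ⟨hs, ht⟩
      rcases hEtilOne e he with ⟨h, -⟩ | ⟨-, h⟩
      exacts [hWV _ hs h, hWV _ ht h]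
    have hc : (edgeCut s t W : ℝ)
        = (edgeCut (fun x : {e : E // e ∉ Etil} => s x.1) (fun x => t x.1) W : ℝ)
          + ∑ v ∈ W, (valEdges s t Etil v : ℝ) := by
      rw [edgeCut_split s t Etil W hnb]
      push_cast
      ring
    have hDm : ∀ v ∈ W, (DE v : ℝ) - muE v
        = (D v : ℝ) - musharp v - (valEdges s t Etil v : ℝ) / 2 := by
      intro v hv
      have hvV : v ∉ Vset := hWV v hv
      rw [hDE v, hmuE v, hmu v]
      by_cases hve : v = s e0
      · rw [if_pos hve, if_pos hve]
        push_cast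
        ring
      · rw [if_neg hve, if_neg hve, if_neg hvV]
        push_cast
        ring
    unfold betaInv
    rw [← Finset.sum_sub_distrib, ← Finset.sum_sub_distrib,
      Finset.sum_congr rfl hDm, Finset.sum_sub_distrib, ← Finset.sum_div, hc]
    ring
end

section
/- Fix a real l > 0 and an integer n ≥ 1. For every integer a, every subset I ⊆ {−1,1,2,…,n}, and every l-convex n-tuple t, there exist an a-admissible sequence (a_0,…,a_{n+1}) and a rational function f on [0,l] with f(0) = f(l) such that: (1) a·δ_{d_I(t)} = Σ_{j=0}^{n+1} a_j·δ_{r_j(t)} + div(f) as divisors on [0,l]; and (2) for every n-tuple t' that is either the zero tuple or has exactly one entry equal to l and all other entries equal to 0, one has the equality of divisors a·δ_{d_I(t')} = Σ_{j=0}^{n+1} a_j·δ_{r_j(t')}. -/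
open Finset

/-- A rational (continuous piecewise-affine, integer slopes) function on the
segment `[0,l]`, encoded by its breakpoints and slopes, normalized by value
`0` at `0`. -/
structure PLFun (l : ℝ) where
  m : ℕ
  pts : Fin (m + 1) → ℝ
  slope : Fin m → ℤ
  mono : StrictMono pts
  first : pts 0 = 0
  last : pts (Fin.last m) = l

/-- The value of the rational function at `x` (normalized so that the value
at `0` is `0`). -/
noncomputable def PLFun.eval {l : ℝ} (F : PLFun l) (x : ℝ) : ℝ :=
  ∑ i : Fin F.m, (F.slope i : ℝ) *
    (max (min x (F.pts i.succ)) (F.pts i.castSucc) - F.pts i.castSucc)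

/-- The divisor of the rational function: left slope minus right slope at each
point of `[0,l]` (so `−(right slope)` at `0` and the left slope at `l`). -/
noncomputable def PLFun.div {l : ℝ} (F : PLFun l) (p : ℝ) : ℤ :=
  (∑ i : Fin F.m, if F.pts i.succ = p then F.slope i else 0)
    - ∑ i : Fin F.m, if F.pts i.castSucc = p then F.slope i else 0

/-- An `l`-convex `n`-tuple: nonnegative entries with sum at most `l`. -/
def LConvex (l : ℝ) {n : ℕ} (t : Fin n → ℝ) : Prop :=
  (∀ i, 0 ≤ t i) ∧ (∑ i, t i) ≤ l

/-- The points `r_0(t) = 0`, `r_j(t) = t_1 + ⋯ + t_j` for `1 ≤ j ≤ n`, and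
`r_{n+1}(t) = l`. -/
noncomputable def rpt (l : ℝ) {n : ℕ} (t : Fin n → ℝ) (j : Fin (n + 2)) : ℝ :=
  if (j : ℕ) = n + 1 then l
  else ∑ i ∈ Finset.univ.filter (fun i : Fin n => (i : ℕ) < (j : ℕ)), t i

/-- The point `d_I(t)`: `Σ_{j∈I, j≥1} t_j` if `−1 ∉ I`, and
`l − Σ_{j∈I, j≥1} t_j` if `−1 ∈ I` (here `t_j` is the entry of index `j`,
with `1 ≤ j ≤ n`). -/
noncomputable def dIpt (l : ℝ) {n : ℕ} (t : Fin n → ℝ) (I : Finset ℤ) : ℝ :=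
  if (-1 : ℤ) ∈ I then
    l - ∑ i ∈ Finset.univ.filter (fun i : Fin n => ((i : ℕ) : ℤ) + 1 ∈ I), t i
  else ∑ i ∈ Finset.univ.filter (fun i : Fin n => ((i : ℕ) : ℤ) + 1 ∈ I), t i

/-- An `a`-admissible sequence. -/
def AdmissibleSeq (a : ℤ) {m : ℕ} (f : Fin m → ℤ) : Prop :=
  (∀ j, f j = 0 ∨ f j = a ∨ f j = -a) ∧ (∑ j, f j = a) ∧
  ∀ s u : Fin m, s ≤ u → |∑ j ∈ Finset.Icc s u, f j| ≤ |a|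

/-!
Let `g_0, …, g_n ≥ 0` be the lengths of the segments `[r_k(t), r_{k+1}(t)]` into which the
points `r_j(t)` cut `[0,l]`. Then `r_j(t) = ∑_{k<j} g_k` and `d_I(t) = ∑_{k∈A} g_k` for a set
`A ⊆ {0,…,n}` depending only on `I`. Put `c_0 = 0`, `c_{k+1} = 0` for `k ∈ A`, `c_{k+1} = a`
otherwise, and `a_j = c_{j+1} - c_j`. Since `c` runs from `0` to `a` through `{0, a}`, the
sequence `(a_j)` is `a`-admissible, and `∑_{j>k} a_j = a·[k ∈ A]`. Summing against the gaps
gives `∑_j a_j r_j(t) = a·d_I(t)`, so `a·δ_{d_I(t)} - ∑_j a_j δ_{r_j(t)}` has degree and moment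
zero. Such a divisor on `[0,l]` is `div f` with `f(0) = f(l)`: take as slope of `f` on each
segment the total of the divisor to its right, and use that the moment of `div f` is
`f(l) - f(0)`. For the tuples `t'` of (2) a single gap equals `l`, so both sides of (2) live on
`{0, l}`, where they agree by the same tail sums.
-/

lemma sum_ite_succ_eq_sum_Ici {m : ℕ} (d : Fin (m + 1) → ℤ) (hd : ∑ k, d k = 0)
    (k : Fin (m + 1)) :
    (∑ i : Fin m, if i.succ = k then ∑ k' ∈ Ioi i.castSucc, d k' else 0)
      = ∑ k' ∈ Ici k, d k' := by
  induction k using Fin.cases with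
  | zero => simp [Fin.succ_ne_zero, hd]
  | succ j =>
    have hIoi : Ioi j.castSucc = Ici j.succ := by
      ext x
      simp [Fin.castSucc_lt_iff_succ_le]
    simp [Fin.succ_inj, hIoi]

lemma sum_ite_castSucc_eq_sum_Ioi {m : ℕ} (d : Fin (m + 1) → ℤ) (k : Fin (m + 1)) :
    (∑ i : Fin m, if i.castSucc = k then ∑ k' ∈ Ioi i.castSucc, d k' else 0)
      = ∑ k' ∈ Ioi k, d k' := by
  induction k using Fin.lastCases with
  | last => simp [Fin.castSucc_ne_last, Ioi_eq_empty.mpr fun b _ => Fin.le_last b]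
  | cast j => simp [Fin.castSucc_inj]

lemma exists_orderEmbedding_fin_map_univ {l : ℝ} {S : Finset ℝ}
    (hS : ∀ p ∈ S, p ∈ Set.Icc 0 l) (h0 : 0 ∈ S) (hl : l ∈ S) :
    ∃ (m : ℕ) (x : Fin (m + 1) ↪o ℝ), x 0 = 0 ∧ x (Fin.last m) = l ∧
      univ.map x.toEmbedding = S := by
  obtain ⟨m, hm⟩ : ∃ m, #S = m + 1 := ⟨#S - 1, by have := card_pos.mpr ⟨0, h0⟩; omega⟩
  refine ⟨m, S.orderEmbOfFin hm, ?_, ?_, S.map_orderEmbOfFin_univ hm⟩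
  · rw [show (0 : Fin (m + 1)) = ⟨0, m.succ_pos⟩ from rfl, orderEmbOfFin_zero hm m.succ_pos]
    exact le_antisymm (min'_le _ _ h0) (hS _ (min'_mem _ _)).1
  · rw [show Fin.last m = ⟨m + 1 - 1, by omega⟩ from rfl, orderEmbOfFin_last hm m.succ_pos]
    exact le_antisymm (hS _ (max'_mem _ _)).2 (le_max' _ _ hl)

namespace PLFun

variable {l : ℝ} (F : PLFun l)

lemma pts_nonneg (k : Fin (F.m + 1)) : 0 ≤ F.pts k :=
  F.first ▸ F.mono.monotone (Fin.zero_le k)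

lemma pts_le (k : Fin (F.m + 1)) : F.pts k ≤ l :=
  (F.mono.monotone (Fin.le_last k)).trans_eq F.last

lemma eval_zero : F.eval 0 = 0 :=
  sum_eq_zero fun i _ => by
    rw [min_eq_left (F.pts_nonneg _), max_eq_right (F.pts_nonneg _), sub_self, mul_zero]

lemma div_pts (k : Fin (F.m + 1)) :
    F.div (F.pts k) = (∑ i, if i.succ = k then F.slope i else 0)
      - ∑ i, if i.castSucc = k then F.slope i else 0 := by
  simp only [div, F.mono.injective.eq_iff]

lemma div_eq_zero_of_notMem_range {p : ℝ} (hp : p ∉ Set.range F.pts) : F.div p = 0 := by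
  have h : ∀ k, F.pts k ≠ p := fun k hk => hp ⟨k, hk⟩
  simp [div, h]

lemma eval_right_eq_sum_pts_mul_div : F.eval l = ∑ k, F.pts k * F.div (F.pts k) := by
  have hseg (i : Fin F.m) : max (min l (F.pts i.succ)) (F.pts i.castSucc) = F.pts i.succ := by
    rw [min_eq_right (F.pts_le _), max_eq_left (F.mono Fin.castSucc_lt_succ).le]
  simp only [eval, hseg, div_pts, Int.cast_sub, Int.cast_sum, Int.cast_ite, Int.cast_zero,
    mul_sub, mul_sum, mul_ite, mul_zero, sum_sub_distrib]
  rw [sum_comm, sum_comm (γ := Fin (F.m + 1))]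
  simp only [sum_ite_eq, mem_univ, if_true, mul_comm]

def ofDiv {m : ℕ} (x : Fin (m + 1) ↪o ℝ) (h0 : x 0 = 0) (hl : x (Fin.last m) = l)
    (d : Fin (m + 1) → ℤ) : PLFun l :=
  ⟨m, x, fun i => ∑ k ∈ Ioi i.castSucc, d k, x.strictMono, h0, hl⟩

lemma ofDiv_div_pts {m : ℕ} (x : Fin (m + 1) ↪o ℝ) (h0 : x 0 = 0) (hl : x (Fin.last m) = l)
    {d : Fin (m + 1) → ℤ} (hd : ∑ k, d k = 0) (k : Fin (m + 1)) :
    (ofDiv x h0 hl d).div (x k) = d k := by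
  show ((∑ i : Fin m, if x i.succ = x k then ∑ k' ∈ Ioi i.castSucc, d k' else 0)
    - ∑ i : Fin m, if x i.castSucc = x k then ∑ k' ∈ Ioi i.castSucc, d k' else 0) = d k
  simp only [x.injective.eq_iff]
  rw [sum_ite_succ_eq_sum_Ici d hd, sum_ite_castSucc_eq_sum_Ioi, ← Ioi_insert,
    sum_insert (by simp), add_sub_cancel_right]

lemma exists_div_eq (hl : 0 ≤ l) (D : ℝ →₀ ℤ) (hD : ∀ p ∉ Set.Icc 0 l, D p = 0)
    (hdeg : D.degree = 0) (hmom : Finsupp.linearCombination ℤ id D = (0 : ℝ)) :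
    ∃ F : PLFun l, F.eval 0 = F.eval l ∧ ∀ p, F.div p = D p := by
  classical
  set S := insert 0 (insert l D.support)
  have hsupp : D.support ⊆ S := (subset_insert _ _).trans (subset_insert _ _)
  have hS : ∀ p ∈ S, p ∈ Set.Icc 0 l := by
    intro p hp
    rcases mem_insert.mp hp with rfl | hp
    · exact ⟨le_rfl, hl⟩
    rcases mem_insert.mp hp with rfl | hp
    · exact ⟨hl, le_rfl⟩
    · exact not_imp_comm.mp (hD p) (Finsupp.mem_support_iff.mp hp)
  obtain ⟨m, x, hx0, hxl, hxS⟩ :=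
    exists_orderEmbedding_fin_map_univ hS (mem_insert_self 0 _) (by simp [S])
  have hsum {β : Type} [AddCommMonoid β] (f : ℝ → β) :
      ∑ p ∈ S, f p = ∑ k, f (x k) := by
    rw [← hxS, sum_map]
    rfl
  have hdeg' : ∑ k, D (x k) = 0 := by
    rw [← hsum, ← sum_subset hsupp fun p _ hp => Finsupp.notMem_support_iff.mp hp]
    exact hdeg
  let F := ofDiv x hx0 hxl fun k => D (x k)
  have hdiv : ∀ p, F.div p = D p := by
    intro p
    by_cases hp : p ∈ S
    · obtain ⟨k, -, rfl⟩ := mem_map.mp (hxS ▸ hp)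
      exact ofDiv_div_pts x hx0 hxl hdeg' k
    · have hpx : p ∉ Set.range x := fun ⟨k, hk⟩ =>
        hp (hk ▸ hxS ▸ mem_map_of_mem _ (mem_univ k))
      rw [F.div_eq_zero_of_notMem_range hpx, Finsupp.notMem_support_iff.mp fun h => hp (hsupp h)]
  refine ⟨F, ?_, hdiv⟩
  rw [Finsupp.linearCombination_apply, Finsupp.sum_of_support_subset D hsupp _ (by simp),
    hsum] at hmom
  rw [F.eval_zero, F.eval_right_eq_sum_pts_mul_div, ← hmom]
  exact sum_congr rfl fun k _ => by rw [hdiv, zsmul_eq_mul, mul_comm]; rfl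

end PLFun

lemma exists_PLFun_ite_eq_sum_add_div {l x : ℝ} {M : ℕ} {y : Fin M → ℝ} {a : ℤ}
    {b : Fin M → ℤ} (hx : x ∈ Set.Icc 0 l) (hy : ∀ j, y j ∈ Set.Icc 0 l)
    (hdeg : ∑ j, b j = a) (hmom : ∑ j, (b j : ℝ) * y j = a * x) :
    ∃ F : PLFun l, F.eval 0 = F.eval l ∧
      ∀ p, (if x = p then a else 0) = (∑ j, b j * if y j = p then 1 else 0) + F.div p := by
  classical
  let D : ℝ →₀ ℤ := Finsupp.single x a - ∑ j, Finsupp.single (y j) (b j)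
  have hD : ∀ p, D p = (if x = p then a else 0) - ∑ j, b j * if y j = p then 1 else 0 := by
    simp [D, Finsupp.single_apply]
  obtain ⟨F, hF, hdiv⟩ := PLFun.exists_div_eq (hx.1.trans hx.2) D
    (fun p hp => by
      have hxp : x ≠ p := fun h => hp (h ▸ hx)
      have hyp : ∀ j, y j ≠ p := fun j h => hp (h ▸ hy j)
      simp [hD, hxp, hyp])
    (by simp [D, hdeg])
    (by simp [D, Finsupp.linearCombination_single, ← hmom, mul_comm])
  exact ⟨F, hF, fun p => by rw [hdiv, hD]; ring⟩

def increments (c : ℕ → ℤ) (M : ℕ) (j : Fin M) : ℤ := c (j + 1) - c j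

lemma sum_increments_filter_le (c : ℕ → ℤ) {M k : ℕ} (hk : k ≤ M) :
    ∑ j ∈ univ.filter (fun j : Fin M => k ≤ (j : ℕ)), increments c M j = c M - c k := by
  rw [sum_filter]
  unfold increments
  rw [Fin.sum_univ_eq_sum_range (fun j => if k ≤ j then c (j + 1) - c j else 0),
    ← sum_filter]
  have : (range M).filter (k ≤ ·) = Ico k M := by ext; simp; omega
  rw [this]
  exact sum_Ico_sub (f := c) hk

lemma sum_increments (c : ℕ → ℤ) (M : ℕ) : ∑ j, increments c M j = c M - c 0 := by
  simpa using sum_increments_filter_le c (M := M) (Nat.zero_le M)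

lemma sum_Icc_increments (c : ℕ → ℤ) {M : ℕ} {s u : Fin M} (h : s ≤ u) :
    ∑ j ∈ Icc s u, increments c M j = c (u + 1) - c s := by
  obtain ⟨M, rfl⟩ : ∃ M', M = M' + 1 := ⟨M - 1, by omega⟩
  have := Fin.sum_Icc_sub h (fun i : Fin (M + 1 + 1) => c i)
  simp only [Fin.val_succ, Fin.val_castSucc] at this
  exact this

lemma admissibleSeq_increments {a : ℤ} {c : ℕ → ℤ} {M : ℕ}
    (hc : ∀ k, c k = 0 ∨ c k = a) (h0 : c 0 = 0) (hM : c M = a) :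
    AdmissibleSeq a (increments c M) := by
  refine ⟨fun j => ?_, by rw [sum_increments, h0, hM, sub_zero], fun s u h => ?_⟩
  · rcases hc j with h1 | h1 <;> rcases hc (j + 1) with h2 | h2 <;> simp [increments, h1, h2]
  · rw [sum_Icc_increments c h]
    rcases hc s with h1 | h1 <;> rcases hc (u + 1) with h2 | h2 <;> simp [h1, h2]

def stepPath (a : ℤ) (A : Finset ℕ) : ℕ → ℤ
  | 0 => 0
  | k + 1 => if k ∈ A then 0 else a

section stepPath

variable {a : ℤ} {A : Finset ℕ} {N : ℕ}

lemma admissibleSeq_increments_stepPath (hN : N ∉ A) :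
    AdmissibleSeq a (increments (stepPath a A) (N + 1)) := by
  refine admissibleSeq_increments (fun k => ?_) rfl (if_neg hN)
  cases k with
  | zero => exact Or.inl rfl
  | succ k => simp only [stepPath]; split_ifs <;> simp

lemma sum_increments_stepPath_filter_lt (hN : N ∉ A) {k : ℕ} (hk : k < N + 1) :
    ∑ j ∈ univ.filter (fun j : Fin (N + 1) => k < (j : ℕ)),
      increments (stepPath a A) (N + 1) j = if k ∈ A then a else 0 := by
  simp only [← Nat.succ_le_iff]
  rw [sum_increments_filter_le _ hk]
  simp only [stepPath, if_neg hN]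
  split_ifs <;> simp

end stepPath

noncomputable def gaps (l : ℝ) {n : ℕ} (t : Fin n → ℝ) : Fin (n + 1) → ℝ :=
  Fin.snoc t (l - ∑ i, t i)

-- `k ∈ dIGaps n I` iff `k + 1 ∈ I` xor `-1 ∈ I`: when `-1 ∈ I`, `d_I = l - ∑ t_j` is
-- the sum of the complementary gaps.
def dIGaps (n : ℕ) (I : Finset ℤ) : Finset ℕ :=
  (range (n + 1)).filter fun k => (k < n ∧ (k : ℤ) + 1 ∈ I) ↔ (-1 : ℤ) ∉ I

section gaps

variable {l : ℝ} {n : ℕ} {t : Fin n → ℝ}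

lemma sum_gaps : ∑ i, gaps l t i = l := by
  simp [gaps, Fin.sum_univ_castSucc]

lemma sum_gaps_filter (P : ℕ → Prop) [DecidablePred P] :
    ∑ i ∈ univ.filter (fun i : Fin (n + 1) => (i : ℕ) < n ∧ P i), gaps l t i
      = ∑ i ∈ univ.filter (fun i : Fin n => P i), t i := by
  simp [sum_filter, Fin.sum_univ_castSucc, gaps]

lemma rpt_eq_sum_gaps (j : Fin (n + 2)) :
    rpt l t j = ∑ i ∈ univ.filter (fun i : Fin (n + 1) => (i : ℕ) < j), gaps l t i := by
  rw [rpt]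
  split_ifs with hj
  · rw [filter_true_of_mem fun i _ => by have := i.isLt; omega, sum_gaps]
  · rw [← sum_gaps_filter fun k => k < (j : ℕ)]
    congr 1
    ext i
    simp only [mem_filter, mem_univ, true_and]
    omega

lemma dIpt_eq_sum_gaps (I : Finset ℤ) :
    dIpt l t I = ∑ i ∈ univ.filter (fun i : Fin (n + 1) => (i : ℕ) ∈ dIGaps n I),
      gaps l t i := by
  rw [dIpt, ← sum_gaps_filter (l := l) fun k => (k : ℤ) + 1 ∈ I]
  split_ifs with hI
  · have hsplit := sum_filter_not_add_sum_filter univ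
      (fun i : Fin (n + 1) => (i : ℕ) < n ∧ ((i : ℕ) : ℤ) + 1 ∈ I) (gaps l t)
    have hcompl :
        univ.filter (fun i : Fin (n + 1) => ¬((i : ℕ) < n ∧ ((i : ℕ) : ℤ) + 1 ∈ I))
          = univ.filter (fun i : Fin (n + 1) => (i : ℕ) ∈ dIGaps n I) := by
      ext i
      simp [dIGaps, hI, Nat.lt_succ_iff.mp i.isLt]
    rw [sum_gaps, hcompl] at hsplit
    linarith
  · congr 1
    ext i
    simp [dIGaps, hI, Nat.lt_succ_iff.mp i.isLt]

lemma LConvex.gaps_nonneg (ht : LConvex l t) (i : Fin (n + 1)) : 0 ≤ gaps l t i := by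
  induction i using Fin.lastCases with
  | last => simpa [gaps] using ht.2
  | cast i => simpa [gaps] using ht.1 i

lemma LConvex.sum_gaps_mem_Icc (ht : LConvex l t) (s : Finset (Fin (n + 1))) :
    ∑ i ∈ s, gaps l t i ∈ Set.Icc 0 l :=
  ⟨sum_nonneg fun i _ => ht.gaps_nonneg i,
    (sum_le_univ_sum_of_nonneg ht.gaps_nonneg).trans_eq sum_gaps⟩

end gaps

section vertex

variable {l : ℝ} {n : ℕ} {t : Fin n → ℝ}

lemma exists_gaps_eq_single
    (ht : (t = fun _ => 0) ∨ ∃ k0 : Fin n, ∀ i, t i = if i = k0 then l else 0) :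
    ∃ k : Fin (n + 1), gaps l t = Pi.single k l := by
  rcases ht with rfl | ⟨k0, hk0⟩
  · refine ⟨Fin.last n, funext fun i => ?_⟩
    induction i using Fin.lastCases <;> simp [gaps, Fin.castSucc_ne_last]
  · obtain rfl : t = Pi.single k0 l := funext fun i => by simp [hk0, Pi.single_apply]
    refine ⟨k0.castSucc, funext fun i => ?_⟩
    induction i using Fin.lastCases <;>
      simp [gaps, Pi.single_apply, Fin.castSucc_inj, (Fin.castSucc_ne_last k0).symm]

lemma rpt_of_gaps_eq_single {k : Fin (n + 1)} (hk : gaps l t = Pi.single k l)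
    (j : Fin (n + 2)) : rpt l t j = if (k : ℕ) < j then l else 0 := by
  simp [rpt_eq_sum_gaps, hk, sum_pi_single']

lemma dIpt_of_gaps_eq_single {k : Fin (n + 1)} (hk : gaps l t = Pi.single k l)
    (I : Finset ℤ) :
    dIpt l t I = if (k : ℕ) ∈ dIGaps n I then l else 0 := by
  simp [dIpt_eq_sum_gaps, hk, sum_pi_single']

end vertex

lemma sum_mul_ite_ite_eq {M : ℕ} (b : Fin M → ℤ) (P : Fin M → Prop) [DecidablePred P]
    (x y p : ℝ) :
    ∑ j, b j * (if (if P j then x else y) = p then 1 else 0)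
      = (∑ j ∈ univ.filter P, b j) * (if x = p then 1 else 0)
        + (∑ j ∈ univ.filter (¬ P ·), b j) * (if y = p then 1 else 0) := by
  rw [sum_mul, sum_mul, ← sum_ite]
  exact sum_congr rfl fun j _ => by split_ifs <;> simp

def rearrSeq (a : ℤ) (n : ℕ) (I : Finset ℤ) : Fin (n + 2) → ℤ :=
  increments (stepPath a (dIGaps n I)) (n + 2)

section rearrSeq

variable (a : ℤ) {n : ℕ} (I : Finset ℤ)

lemma admissibleSeq_rearrSeq : AdmissibleSeq a (rearrSeq a n I) :=
  admissibleSeq_increments_stepPath (by simp [dIGaps])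

lemma sum_rearrSeq_filter_lt (k : Fin (n + 1)) :
    ∑ j ∈ univ.filter (fun j : Fin (n + 2) => (k : ℕ) < j), rearrSeq a n I j
      = if (k : ℕ) ∈ dIGaps n I then a else 0 :=
  sum_increments_stepPath_filter_lt (by simp [dIGaps]) (by omega)

lemma sum_rearrSeq_mul_rpt (l : ℝ) (t : Fin n → ℝ) :
    ∑ j, (rearrSeq a n I j : ℝ) * rpt l t j = a * dIpt l t I := by
  simp only [rpt_eq_sum_gaps, dIpt_eq_sum_gaps, sum_filter, mul_sum]
  rw [sum_comm]
  refine sum_congr rfl fun k _ => ?_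
  simp only [mul_ite, mul_zero]
  rw [← sum_filter, ← sum_mul, ← Int.cast_sum, sum_rearrSeq_filter_lt]
  split_ifs <;> simp

lemma ite_dIpt_eq_sum_of_gaps_eq_single {l : ℝ} {t : Fin n → ℝ} {k : Fin (n + 1)}
    (hk : gaps l t = Pi.single k l) (p : ℝ) :
    (if dIpt l t I = p then a else 0)
      = ∑ j, rearrSeq a n I j * if rpt l t j = p then 1 else 0 := by
  have htail := sum_rearrSeq_filter_lt a I k
  have htotal := (admissibleSeq_rearrSeq a I (n := n)).2.1
  rw [dIpt_of_gaps_eq_single hk]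
  simp only [rpt_of_gaps_eq_single hk]
  have hhead : ∑ j ∈ univ.filter (fun j : Fin (n + 2) => ¬ (k : ℕ) < j), rearrSeq a n I j
      = if (k : ℕ) ∈ dIGaps n I then 0 else a := by
    have hsplit := sum_filter_add_sum_filter_not univ
      (fun j : Fin (n + 2) => (k : ℕ) < j) (rearrSeq a n I)
    rw [htotal, htail] at hsplit
    split_ifs at hsplit ⊢ <;> linarith
  rw [sum_mul_ite_ite_eq, htail, hhead]
  split_ifs <;> simp_all

end rearrSeq

theorem rearrangement_on_a_segment_general (l : ℝ) (n : ℕ)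
    (a : ℤ) (I : Finset ℤ)
    (t : Fin n → ℝ) (ht : LConvex l t) :
    ∃ (aseq : Fin (n + 2) → ℤ) (F : PLFun l),
      AdmissibleSeq a aseq ∧
      F.eval 0 = F.eval l ∧
      (∀ p ∈ Set.Icc (0 : ℝ) l,
        (if dIpt l t I = p then a else 0)
          = (∑ j : Fin (n + 2), aseq j * (if rpt l t j = p then 1 else 0))
            + F.div p) ∧
      (∀ t' : Fin n → ℝ,
        ((t' = fun _ => 0) ∨ ∃ k0 : Fin n, ∀ i, t' i = if i = k0 then l else 0) →
        ∀ p ∈ Set.Icc (0 : ℝ) l,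
          (if dIpt l t' I = p then a else 0)
            = ∑ j : Fin (n + 2), aseq j * (if rpt l t' j = p then 1 else 0)) := by
  have hadm := admissibleSeq_rearrSeq a I (n := n)
  obtain ⟨F, hF, hdiv⟩ := exists_PLFun_ite_eq_sum_add_div
    (dIpt_eq_sum_gaps (t := t) I ▸ ht.sum_gaps_mem_Icc _)
    (fun j => rpt_eq_sum_gaps (t := t) j ▸ ht.sum_gaps_mem_Icc _)
    hadm.2.1 (sum_rearrSeq_mul_rpt a I l t)
  refine ⟨rearrSeq a n I, F, hadm, hF, fun p _ => hdiv p, fun t' ht' p _ => ?_⟩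
  obtain ⟨k, hk⟩ := exists_gaps_eq_single ht'
  exact ite_dIpt_eq_sum_of_gaps_eq_single a I hk p

theorem rearrangement_on_a_segment (l : ℝ) (hl : 0 < l) (n : ℕ) (hn : 1 ≤ n)
    (a : ℤ) (I : Finset ℤ) (hI : I ⊆ insert (-1) (Finset.Icc 1 (n : ℤ)))
    (t : Fin n → ℝ) (ht : LConvex l t) :
    ∃ (aseq : Fin (n + 2) → ℤ) (F : PLFun l),
      AdmissibleSeq a aseq ∧
      F.eval 0 = F.eval l ∧
      (∀ p ∈ Set.Icc (0 : ℝ) l,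
        (if dIpt l t I = p then a else 0)
          = (∑ j : Fin (n + 2), aseq j * (if rpt l t j = p then 1 else 0))
            + F.div p) ∧
      (∀ t' : Fin n → ℝ,
        ((t' = fun _ => 0) ∨ ∃ k0 : Fin n, ∀ i, t' i = if i = k0 then l else 0) →
        ∀ p ∈ Set.Icc (0 : ℝ) l,
          (if dIpt l t' I = p then a else 0)
            = ∑ j : Fin (n + 2), aseq j * (if rpt l t' j = p then 1 else 0)) :=
  rearrangement_on_a_segment_general l n a I t ht
end

section
/- Let Γ be a connected graph, n ≥ 1 an integer, and D a divisor on the subdivision Γ^{(n+1)}. Suppose that for every tuple u = (u_1,…,u_n) ∈ ℝ^n with u_i > 0 for all i and u_1 + ⋯ + u_n < 1, there exists a flow φ_u on Γ^{(n+1)} such that D + ∂φ_u = 0 and Σ_{e'∈E(Γ^{(n+1)})} φ_u(e')·γ(e')·ℓ_u(e') = 0 for every 1-cycle γ on Γ^{(n+1)}. Then there exists a single flow φ on Γ^{(n+1)} such that D + ∂φ = 0 and Σ_{e'∈E(Γ^{(n+1)})} φ(e')·γ(e')·ℓ_u(e') = 0 for every 1-cycle γ and every tuple u ∈ ℝ^n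 with u_i ≥ 0 and u_1 + ⋯ + u_n ≤ 1. -/
open Finset

/-- Boundary `∂φ` of a `1`-chain `φ`. -/
def bdry {V E : Type} [Fintype E] [DecidableEq V]
    (s t : E → V) (φ : E → ℤ) (v : V) : ℤ :=
  ∑ e : E, φ e * ((if t e = v then 1 else 0) - (if s e = v then 1 else 0))

/-- Source map of the subdivision `Γ^{(n+1)}` in which every edge is replaced
by a path of `n+1` edges through `n` exceptional vertices. -/
def subnS {V E : Type} (s : E → V) (n : ℕ) :
    E × Fin (n + 1) → V ⊕ (E × Fin n) :=
  fun p => if h : (p.2 : ℕ) = 0 then Sum.inl (s p.1)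
    else Sum.inr (p.1, ⟨(p.2 : ℕ) - 1, by have := p.2.isLt; omega⟩)

/-- Target map of the subdivision `Γ^{(n+1)}`. -/
def subnT {V E : Type} (t : E → V) (n : ℕ) :
    E × Fin (n + 1) → V ⊕ (E × Fin n) :=
  fun p => if h : (p.2 : ℕ) = n then Sum.inl (t p.1)
    else Sum.inr (p.1, ⟨(p.2 : ℕ), by have := p.2.isLt; omega⟩)

/-- The length function `ℓ_u` on the edges of `Γ^{(n+1)}`. -/
noncomputable def lenU {E : Type} (n : ℕ) (u : Fin n → ℝ) :
    E × Fin (n + 1) → ℝ :=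
  fun p => if h : (p.2 : ℕ) < n then u ⟨(p.2 : ℕ), h⟩ else 1 - ∑ i, u i

theorem flow_independent_of_lengths
    {V E : Type} [Fintype V] [Fintype E] [DecidableEq V] [DecidableEq E]
    (s t : E → V) (hconn : GraphConnected s t)
    (n : ℕ) (hn : 1 ≤ n)
    (D : V ⊕ (E × Fin n) → ℤ)
    (h : ∀ u : Fin n → ℝ, (∀ i, 0 < u i) → (∑ i, u i) < 1 →
      ∃ φ : E × Fin (n + 1) → ℤ,
        (∀ v, D v + bdry (subnS s n) (subnT t n) φ v = 0) ∧
        ∀ γ : E × Fin (n + 1) → ℤ,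
          (∀ v, bdry (subnS s n) (subnT t n) γ v = 0) →
          ∑ e' : E × Fin (n + 1), ((φ e' * γ e' : ℤ) : ℝ) * lenU n u e' = 0) :
    ∃ φ : E × Fin (n + 1) → ℤ,
      (∀ v, D v + bdry (subnS s n) (subnT t n) φ v = 0) ∧
      ∀ γ : E × Fin (n + 1) → ℤ,
        (∀ v, bdry (subnS s n) (subnT t n) γ v = 0) →
        ∀ u : Fin n → ℝ, (∀ i, 0 ≤ u i) → (∑ i, u i) ≤ 1 →
          ∑ e' : E × Fin (n + 1), ((φ e' * γ e' : ℤ) : ℝ) * lenU n u e' = 0 := by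
  classical
  -- A transcendental number in (0, 1/2)
  set x : ℝ := liouvilleNumber 10 with hxdef
  have htrZ : Transcendental ℤ x := transcendental_liouvilleNumber (by norm_num)
  have htr : Transcendental ℚ x := fun hA => htrZ ((IsFractionRing.isAlgebraic_iff ℤ ℚ ℝ).mpr hA)
  have h10 : (1:ℝ) < 10 := by norm_num
  have hsplit := LiouvilleNumber.partialSum_add_remainder h10 0
  have hrem := LiouvilleNumber.remainder_pos h10 0
  have hrlt := LiouvilleNumber.remainder_lt' 0 h10
  have hps : LiouvilleNumber.partialSum 10 0 = 1/10 := by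
    simp [LiouvilleNumber.partialSum, Nat.factorial]
  have hx0 : 0 < x := by rw [hxdef, ← hsplit, hps]; nlinarith
  have hx2 : x < 1/2 := by
    rw [hxdef, ← hsplit, hps]
    have : ((1:ℝ) - 1/10)⁻¹ * (1 / 10 ^ Nat.factorial (0+1)) = 1/9 := by
      norm_num [Nat.factorial]
    rw [this] at hrlt
    nlinarith
  have hgeom : ∀ m : ℕ, (∑ i ∈ Finset.range m, x ^ (i+1)) < 1 := by
    intro m
    induction m with
    | zero => simp
    | succ k ih =>
      rw [Finset.sum_range_succ']
      have hh : ∑ i ∈ Finset.range k, x ^ (i+1+1) = x * ∑ i ∈ Finset.range k, x^(i+1) := by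
        rw [Finset.mul_sum]; exact Finset.sum_congr rfl (fun i _ => by ring)
      have hx1 : x ^ (0+1) = x := by ring
      rw [hh, hx1]
      nlinarith [mul_le_mul_of_nonneg_left ih.le hx0.le]
  set u : Fin n → ℝ := fun i => x ^ ((i:ℕ)+1) with hudef
  have hupos : ∀ i, 0 < u i := fun i => pow_pos hx0 _
  have husum : (∑ i, u i) < 1 := by
    rw [hudef, Fin.sum_univ_eq_sum_range (fun i => x ^ (i+1)) n]
    exact hgeom n
  obtain ⟨φ, hφ1, hφ2⟩ := h u hupos husum
  refine ⟨φ, hφ1, ?_⟩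
  intro γ hγ
  set A : Fin (n+1) → ℤ := fun j => ∑ e : E, φ (e, j) * γ (e, j) with hAdef
  have sum_eq : ∀ u' : Fin n → ℝ,
      ∑ e' : E × Fin (n + 1), ((φ e' * γ e' : ℤ) : ℝ) * lenU n u' e'
      = ∑ j : Fin (n+1), (A j : ℝ) *
          (if h : (j:ℕ) < n then u' ⟨(j:ℕ), h⟩ else 1 - ∑ i, u' i) := by
    intro u'
    rw [Fintype.sum_prod_type_right]
    refine Finset.sum_congr rfl (fun j _ => ?_)
    rw [hAdef]
    push_cast
    rw [Finset.sum_mul]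
    rfl
  have key := hφ2 γ hγ
  rw [sum_eq u] at key
  have hA0 : ∀ j : Fin (n+1), A j = 0 := by
    rw [Fin.sum_univ_castSucc] at key
    simp only [Fin.coe_castSucc, Fin.is_lt, dif_pos, Fin.val_last, lt_self_iff_false,
      dif_neg, not_false_iff, Fin.eta, hudef] at key
    -- key : ∑ j : Fin n, (A j.castSucc:ℝ) * x^(j+1) + (A (Fin.last n):ℝ) * (1 - ∑ i, x^(i+1)) = 0
    set p : Polynomial ℚ :=
      Polynomial.C ((A (Fin.last n) : ℤ) : ℚ) + ∑ j : Fin n,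
        Polynomial.C (((A j.castSucc : ℤ) : ℚ) - ((A (Fin.last n) : ℤ) : ℚ))
          * Polynomial.X ^ ((j:ℕ)+1) with hpdef
    have hev : Polynomial.aeval x p = 0 := by
      rw [hpdef]
      simp only [map_add, map_sum, map_mul, map_pow, Polynomial.aeval_C, Polynomial.aeval_X,
        eq_ratCast]
      push_cast
      have expand : ∑ j : Fin n, ((A j.castSucc : ℝ) - (A (Fin.last n) : ℝ)) * x ^ ((j:ℕ)+1)
          = (∑ j : Fin n, (A j.castSucc : ℝ) * x ^ ((j:ℕ)+1))
            - (A (Fin.last n) : ℝ) * ∑ i : Fin n, x ^ ((i:ℕ)+1) := by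
        rw [Finset.mul_sum, ← Finset.sum_sub_distrib]
        exact Finset.sum_congr rfl (fun j _ => by ring)
      rw [expand]
      linear_combination key
    have hp0 : p = 0 := transcendental_iff.mp htr p hev
    have hcoeff : ∀ k : ℕ, p.coeff k = 0 := fun k => by rw [hp0]; simp
    have haN : ((A (Fin.last n) : ℤ) : ℚ) = 0 := by
      have h0 := hcoeff 0
      rw [hpdef] at h0
      simpa [Polynomial.coeff_add, Polynomial.finset_sum_coeff, Polynomial.coeff_C_mul,
        Polynomial.coeff_X_pow] using h0
    have hAj : ∀ k : Fin n, ((A k.castSucc : ℤ) : ℚ) = 0 := by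
      intro k
      have hk := hcoeff ((k:ℕ)+1)
      rw [hpdef] at hk
      simp only [Polynomial.coeff_add, Polynomial.finset_sum_coeff, Polynomial.coeff_C_mul,
        Polynomial.coeff_X_pow, Polynomial.coeff_C, Nat.succ_ne_zero, if_false, zero_add] at hk
      rw [Finset.sum_eq_single k] at hk
      · rw [haN] at hk
        simpa using hk
      · intro j _ hjk
        have hne : ¬((k:ℕ) + 1 = (j:ℕ) + 1) := fun hc => hjk (Fin.ext (by omega))
        rw [if_neg hne, mul_zero]
      · intro hk'; exact absurd (Finset.mem_univ k) hk'
    intro j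
    by_cases hj : (j:ℕ) < n
    · have hjeq : j = (⟨(j:ℕ), hj⟩ : Fin n).castSucc := Fin.ext rfl
      rw [hjeq]
      exact_mod_cast hAj ⟨(j:ℕ), hj⟩
    · have hjeq : j = Fin.last n := Fin.ext (by have := j.isLt; simp only [Fin.val_last]; omega)
      rw [hjeq]
      exact_mod_cast haN
  intro u' hu0 hu1
  rw [sum_eq u']
  refine Finset.sum_eq_zero (fun j _ => ?_)
  rw [hA0 j]
  simp
end

section
/- For n ≥ 1, let σ ⊆ ℝ^{n+1} be the convex cone generated by the vectors (v,1) with v ∈ {0,1}^n. Then the dual cone σ∨ = {u ∈ ℝ^{n+1} : ⟨u,x⟩ ≥ 0 for all x ∈ σ} (with respect to the standard inner product) equals the convex cone generated by the 2n vectors e_1,…,e_n and e_{n+1}−e_1,…,e_{n+1}−e_n, where e_1,…,e_{n+1} is the standard basis of ℝ^{n+1}. -/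
/-! Both cones are pointed-cone hulls, and the dual of a hull is the dual of its generators, so it
suffices to compare generators. Each `e_i` and `e_{n+1} - e_i` pairs to `x_i ≥ 0`, resp.
`1 - x_i ≥ 0`, with a vertex `(x, 1)`. Conversely, testing `u` in the dual against the vertex that
is `1` exactly on the negative coordinates of `u` gives `u_{n+1} ≥ ∑ u_i⁻`, and then
`u = ∑ u_i⁺ e_i + ∑ u_i⁻ (e_{n+1} - e_i) + (u_{n+1} - ∑ u_i⁻) e_{n+1}`, where
`e_{n+1} = e_1 + (e_{n+1} - e_1)` lies in the cone as soon as `n ≥ 1`. -/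

open Finset

/-- The convex cone generated by a set of vectors: all finite nonnegative
linear combinations of elements of `S`. -/
def coneGen {m : ℕ} (S : Set (Fin m → ℝ)) : Set (Fin m → ℝ) :=
  {x | ∃ (k : ℕ) (c : Fin k → ℝ) (v : Fin k → Fin m → ℝ),
    (∀ i, 0 ≤ c i) ∧ (∀ i, v i ∈ S) ∧ x = ∑ i, c i • v i}

/-- The dual cone with respect to the standard inner product. -/
def dualCone {m : ℕ} (σ : Set (Fin m → ℝ)) : Set (Fin m → ℝ) :=
  {u | ∀ x ∈ σ, 0 ≤ ∑ i, u i * x i}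

/-- The vertices `(v,1)` of the unit hypercube, `v ∈ {0,1}^n`, viewed in
`ℝ^{n+1}` with last coordinate `1`. -/
def hcVerts (n : ℕ) : Set (Fin (n + 1) → ℝ) :=
  {x | x (Fin.last n) = 1 ∧ ∀ i, i ≠ Fin.last n → (x i = 0 ∨ x i = 1)}

/-- The `2n` generators `e_1,…,e_n` and `e_{n+1}−e_1,…,e_{n+1}−e_n` of the
dual of the cone over the hypercube. -/
def hcDualGens (n : ℕ) : Set (Fin (n + 1) → ℝ) :=
  {u | (∃ i : Fin n, u = Pi.single i.castSucc 1) ∨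
    ∃ i : Fin n, u = Pi.single (Fin.last n) 1 - Pi.single i.castSucc 1}

open Matrix PointedCone

theorem coneGen_eq_hull {m : ℕ} (S : Set (Fin m → ℝ)) : coneGen S = hull ℝ S := by
  ext x
  rw [SetLike.mem_coe, Submodule.mem_span_set']
  constructor
  · rintro ⟨k, c, v, hc, hv, rfl⟩
    exact ⟨k, fun i => ⟨c i, hc i⟩, fun i => ⟨v i, hv i⟩, rfl⟩
  · rintro ⟨k, c, v, rfl⟩
    exact ⟨k, fun i => c i, fun i => v i, fun i => (c i).2, fun i => (v i).2, rfl⟩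

theorem dualCone_eq_dual {m : ℕ} (σ : Set (Fin m → ℝ)) :
    dualCone σ = dual (dotProductBilin ℝ ℝ) σ := by
  ext u
  simp only [dualCone, SetLike.mem_coe, mem_dual, dotProductBilin_apply_apply]
  exact forall₂_congr fun x _ => by rw [dotProduct_comm]; rfl

section Hypercube

variable {n : ℕ}

theorem hcDualGens_subset_dual_hcVerts :
    hcDualGens n ⊆ dual (dotProductBilin ℝ ℝ) (hcVerts n) := by
  rintro g (⟨i, rfl⟩ | ⟨i, rfl⟩) x ⟨hlast, hbin⟩ <;>
    rcases hbin i.castSucc (Fin.castSucc_ne_last i) with hi | hi <;>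
    simp [dotProduct_sub, hlast, hi]

theorem eq_sum_posPart_add_sum_negPart (u : Fin (n + 1) → ℝ) :
    u = ∑ i : Fin n, (u i.castSucc)⁺ • Pi.single i.castSucc 1
      + ∑ i : Fin n, (u i.castSucc)⁻ • (Pi.single (Fin.last n) 1 - Pi.single i.castSucc 1)
      + (u (Fin.last n) - ∑ i : Fin n, (u i.castSucc)⁻) • Pi.single (Fin.last n) 1 := by
  ext j
  induction j using Fin.lastCases with
  | last => simp [Fin.castSucc_ne_last, eq_comm (a := Fin.last n)]
  | cast j => simp [Pi.single_apply, Fin.castSucc_ne_last, Fin.castSucc_inj, ← sub_eq_add_neg]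

noncomputable def negIndicatorVertex (u : Fin (n + 1) → ℝ) : Fin (n + 1) → ℝ :=
  Fin.lastCases 1 fun i => if u i.castSucc < 0 then 1 else 0

theorem negIndicatorVertex_mem_hcVerts (u : Fin (n + 1) → ℝ) :
    negIndicatorVertex u ∈ hcVerts n := by
  refine ⟨by simp [negIndicatorVertex], fun i hi => ?_⟩
  induction i using Fin.lastCases with
  | last => exact absurd rfl hi
  | cast i => simp only [negIndicatorVertex, Fin.lastCases_castSucc]; split_ifs <;> simp

theorem dotProduct_negIndicatorVertex (u : Fin (n + 1) → ℝ) :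
    u ⬝ᵥ negIndicatorVertex u = u (Fin.last n) - ∑ i : Fin n, (u i.castSucc)⁻ := by
  rw [dotProduct, Fin.sum_univ_castSucc, sub_eq_neg_add, ← Finset.sum_neg_distrib]
  simp only [negIndicatorVertex, Fin.lastCases_castSucc, Fin.lastCases_last, mul_one]
  congr 1
  refine Finset.sum_congr rfl fun i _ => ?_
  split_ifs with h
  · simp [negPart_eq_neg.mpr h.le]
  · simp [negPart_eq_zero.mpr (not_lt.mp h)]

theorem single_last_mem_hull_hcDualGens (i : Fin n) :
    Pi.single (Fin.last n) 1 ∈ hull ℝ (hcDualGens n) := by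
  rw [← add_sub_cancel (Pi.single i.castSucc 1) (Pi.single (Fin.last n) 1)]
  exact add_mem (subset_hull (Or.inl ⟨i, rfl⟩)) (subset_hull (Or.inr ⟨i, rfl⟩))

theorem dual_hcVerts_le_hull_hcDualGens (i₀ : Fin n) :
    dual (dotProductBilin ℝ ℝ) (hcVerts n) ≤ hull ℝ (hcDualGens n) := by
  intro u hu
  have hslack : 0 ≤ u (Fin.last n) - ∑ i : Fin n, (u i.castSucc)⁻ := by
    rw [← dotProduct_negIndicatorVertex, dotProduct_comm]
    exact hu (negIndicatorVertex_mem_hcVerts u)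
  rw [eq_sum_posPart_add_sum_negPart u]
  refine add_mem (add_mem (sum_mem fun i _ => ?_) (sum_mem fun i _ => ?_)) ?_
  · exact smul_mem _ (posPart_nonneg _) (subset_hull (Or.inl ⟨i, rfl⟩))
  · exact smul_mem _ (negPart_nonneg _) (subset_hull (Or.inr ⟨i, rfl⟩))
  · exact smul_mem _ hslack (single_last_mem_hull_hcDualGens i₀)

end Hypercube

theorem dual_cone_of_hypercube_cone (n : ℕ) (hn : 1 ≤ n) :
    dualCone (coneGen (hcVerts n)) = coneGen (hcDualGens n) := by
  rw [dualCone_eq_dual, coneGen_eq_hull, coneGen_eq_hull, dual_hull]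
  exact congrArg SetLike.coe <| le_antisymm (dual_hcVerts_le_hull_hcDualGens ⟨0, hn⟩)
    (Submodule.span_le.mpr hcDualGens_subset_dual_hcVerts)
end

section
/- For n ≥ 1, every vector u = (b_1,…,b_n,h) ∈ ℤ^{n+1} satisfying ⟨u,(v,1)⟩ ≥ 0 for all v ∈ {0,1}^n satisfies h + Σ_{i : b_i < 0} b_i ≥ 0 and can be written as u = Σ_{i : b_i ≥ 0} b_i·e_i + Σ_{i : b_i < 0} (−b_i)·(e_{n+1} − e_i) + (h + Σ_{i : b_i < 0} b_i)·e_{n+1}, where all coefficients are nonnegative integers. Consequently, since e_{n+1} = e_i + (e_{n+1} − e_i), the additive monoid σ∨ ∩ ℤ^{n+1} is generated by the 2n vectors e_1,…,e_n and e_{n+1}−e_1,…,e_{n+1}−e_n, where σ ⊆ ℝ^{n+1} is the convex cone generated by the vectors (v,1) with v ∈ {0,1}^n and σ∨ is its dual cone. -/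
open Finset

/-!
Pairing `u = (b, h)` with the vertex `(v, 1)`, where `v` is the indicator of `{i | b i < 0}`,
gives `h + ∑_{b i < 0} b i ≥ 0`; hence the decomposition of `u`, an identity valid for every
`u`, has nonnegative integer coefficients. Conversely `e_i` and `e_{n+1} - e_i` pair nonnegatively
with every `(v, 1)` because `v i ∈ {0, 1}`, and a set and the cone it generates have the same
dual cone.
-/

theorem subset_coneGen {m : ℕ} (S : Set (Fin m → ℝ)) : S ⊆ coneGen S :=
  fun x hx => ⟨1, fun _ => 1, fun _ => x, fun _ => zero_le_one, fun _ => hx, by simp⟩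

theorem dualCone_coneGen {m : ℕ} (S : Set (Fin m → ℝ)) :
    dualCone (coneGen S) = dualCone S := by
  refine Set.Subset.antisymm (fun u hu x hx => ?_) ?_
  · exact hu x (subset_coneGen S hx)
  · rintro u hu _ ⟨k, c, v, hc, hv, rfl⟩
    have hsum : ∑ j, u j * (∑ i, c i • v i) j = ∑ i, c i * ∑ j, u j * v i j := by
      simp only [Finset.sum_apply, Pi.smul_apply, smul_eq_mul, mul_sum]
      rw [sum_comm]
      exact sum_congr rfl fun i _ => sum_congr rfl fun j _ => by ring
    rw [hsum]
    exact sum_nonneg fun i _ => mul_nonneg (hc i) (hu _ (hv i))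

def intDualCone {m : ℕ} (σ : Set (Fin m → ℝ)) : AddSubmonoid (Fin m → ℤ) where
  carrier := {w | (fun i => (w i : ℝ)) ∈ dualCone σ}
  zero_mem' x _ := by simp
  add_mem' {a b} ha hb x hx := by
    simpa only [Pi.add_apply, Int.cast_add, add_mul, sum_add_distrib] using
      add_nonneg (ha x hx) (hb x hx)

@[simp]
theorem mem_intDualCone {m : ℕ} {σ : Set (Fin m → ℝ)} {w : Fin m → ℤ} :
    w ∈ intDualCone σ ↔ (fun i => (w i : ℝ)) ∈ dualCone σ :=
  Iff.rfl

theorem sum_intCast_single_one_mul {m : ℕ} (p : Fin m) (x : Fin m → ℝ) :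
    ∑ j, (((Pi.single p 1 : Fin m → ℤ) j : ℝ) * x j) = x p := by
  simp [Pi.single_apply]

theorem mem_hcVerts_castSucc {n : ℕ} {x : Fin (n + 1) → ℝ} (hx : x ∈ hcVerts n)
    (i : Fin n) : 0 ≤ x i.castSucc ∧ x i.castSucc ≤ x (Fin.last n) := by
  rw [hx.1]
  rcases hx.2 _ (Fin.castSucc_lt_last i).ne with h | h <;> simp [h]

theorem intCast_mem_hcVerts {n : ℕ} {x : Fin (n + 1) → ℤ} (hlast : x (Fin.last n) = 1)
    (h01 : ∀ i, i ≠ Fin.last n → x i = 0 ∨ x i = 1) :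
    (fun i => (x i : ℝ)) ∈ hcVerts n :=
  ⟨by simp [hlast], fun i hi => by rcases h01 i hi with h | h <;> simp [h]⟩

def IsNonnegOnHypercube {n : ℕ} (u : Fin (n + 1) → ℤ) : Prop :=
  ∀ x : Fin (n + 1) → ℤ, x (Fin.last n) = 1 →
    (∀ i, i ≠ Fin.last n → x i = 0 ∨ x i = 1) → 0 ≤ ∑ i, u i * x i

theorem IsNonnegOnHypercube.of_intCast_mem_dualCone {n : ℕ} {w : Fin (n + 1) → ℤ}
    (hw : (fun i => (w i : ℝ)) ∈ dualCone (coneGen (hcVerts n))) : IsNonnegOnHypercube w := by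
  intro x hlast h01
  have hvert : (0 : ℝ) ≤ ∑ i, (w i : ℝ) * x i :=
    hw _ (subset_coneGen _ (intCast_mem_hcVerts hlast h01))
  exact_mod_cast hvert

theorem IsNonnegOnHypercube.zero_le_last_add_sum_neg {n : ℕ} {u : Fin (n + 1) → ℤ}
    (hu : IsNonnegOnHypercube u) :
    0 ≤ u (Fin.last n) +
      ∑ i ∈ univ.filter (fun i : Fin n => u i.castSucc < 0), u i.castSucc := by
  have hvert := hu (Fin.snoc (fun i : Fin n => if u i.castSucc < 0 then 1 else 0) 1)
    (Fin.snoc_last ..) fun i hi => by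
      obtain ⟨j, rfl⟩ := Fin.exists_castSucc_eq.2 hi
      simp only [Fin.snoc_castSucc]
      split_ifs <;> simp
  simpa [Fin.sum_univ_castSucc, sum_filter, add_comm] using hvert

theorem eq_sum_smul_single_add_sum_smul_sub_single {R : Type*} [Ring R] {n : ℕ}
    (u : Fin (n + 1) → R) (p : Fin n → Prop) [DecidablePred p] :
    u = (∑ i ∈ univ.filter (fun i => ¬ p i), u i.castSucc • Pi.single i.castSucc (1 : R))
      + (∑ i ∈ univ.filter p,
          (-(u i.castSucc)) • (Pi.single (Fin.last n) (1 : R) - Pi.single i.castSucc 1))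
      + (u (Fin.last n) + ∑ i ∈ univ.filter p, u i.castSucc) •
          Pi.single (Fin.last n) (1 : R) := by
  simp only [neg_smul, smul_sub, sum_neg_distrib, sum_sub_distrib, add_smul, sum_smul]
  conv_lhs =>
    rw [← univ_sum_single u, Fin.sum_univ_castSucc, ← sum_filter_not_add_sum_filter _ p]
  simp only [← Pi.single_smul, smul_eq_mul, mul_one]
  abel

theorem AddSubmonoid.zsmul_mem_of_nonneg {G : Type*} [AddGroup G] (M : AddSubmonoid G) {g : G}
    (hg : g ∈ M) {c : ℤ} (hc : 0 ≤ c) : c • g ∈ M := by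
  lift c to ℕ using hc
  rw [natCast_zsmul]
  exact M.nsmul_mem hg c

def hypercubeDualGenerators (n : ℕ) : Set (Fin (n + 1) → ℤ) :=
  {w | (∃ i : Fin n, w = Pi.single i.castSucc 1) ∨
    ∃ i : Fin n, w = Pi.single (Fin.last n) 1 - Pi.single i.castSucc 1}

theorem closure_hypercubeDualGenerators_le (n : ℕ) :
    AddSubmonoid.closure (hypercubeDualGenerators n) ≤ intDualCone (coneGen (hcVerts n)) := by
  rw [AddSubmonoid.closure_le]
  rintro _ (⟨i, rfl⟩ | ⟨i, rfl⟩) <;>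
    simp only [SetLike.mem_coe, mem_intDualCone, dualCone_coneGen] <;>
    intro x hx
  · simpa only [sum_intCast_single_one_mul] using (mem_hcVerts_castSucc hx i).1
  · simpa [sub_mul, sum_intCast_single_one_mul] using (mem_hcVerts_castSucc hx i).2

theorem IsNonnegOnHypercube.mem_closure_hypercubeDualGenerators {n : ℕ} (hn : 1 ≤ n)
    {w : Fin (n + 1) → ℤ} (hw : IsNonnegOnHypercube w) :
    w ∈ AddSubmonoid.closure (hypercubeDualGenerators n) := by
  set M := AddSubmonoid.closure (hypercubeDualGenerators n)
  have single_mem (i : Fin n) : Pi.single i.castSucc 1 ∈ M :=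
    AddSubmonoid.subset_closure (Or.inl ⟨i, rfl⟩)
  have sub_single_mem (i : Fin n) : Pi.single (Fin.last n) 1 - Pi.single i.castSucc 1 ∈ M :=
    AddSubmonoid.subset_closure (Or.inr ⟨i, rfl⟩)
  have last_mem : Pi.single (Fin.last n) 1 ∈ M := by
    simpa using M.add_mem (single_mem ⟨0, hn⟩) (sub_single_mem ⟨0, hn⟩)
  rw [eq_sum_smul_single_add_sum_smul_sub_single w (fun i => w i.castSucc < 0)]
  refine M.add_mem (M.add_mem (M.sum_mem fun i hi => ?_) (M.sum_mem fun i hi => ?_)) ?_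
  · exact M.zsmul_mem_of_nonneg (single_mem i) (not_lt.1 (mem_filter.1 hi).2)
  · exact M.zsmul_mem_of_nonneg (sub_single_mem i) (neg_nonneg.2 (mem_filter.1 hi).2.le)
  · exact M.zsmul_mem_of_nonneg last_mem hw.zero_le_last_add_sum_neg

theorem lattice_points_of_dual_hypercube_cone (n : ℕ) (hn : 1 ≤ n)
    (u : Fin (n + 1) → ℤ)
    (hu : ∀ x : Fin (n + 1) → ℤ, x (Fin.last n) = 1 →
      (∀ i, i ≠ Fin.last n → x i = 0 ∨ x i = 1) → 0 ≤ ∑ i, u i * x i) :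
    (0 ≤ u (Fin.last n) +
        ∑ i ∈ Finset.univ.filter (fun i : Fin n => u i.castSucc < 0), u i.castSucc) ∧
    (u = (∑ i ∈ Finset.univ.filter (fun i : Fin n => 0 ≤ u i.castSucc),
            u i.castSucc • Pi.single i.castSucc (1 : ℤ))
        + (∑ i ∈ Finset.univ.filter (fun i : Fin n => u i.castSucc < 0),
            (-(u i.castSucc)) •
              (Pi.single (Fin.last n) (1 : ℤ) - Pi.single i.castSucc 1))
        + (u (Fin.last n) +
            ∑ i ∈ Finset.univ.filter (fun i : Fin n => u i.castSucc < 0), u i.castSucc) •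
            Pi.single (Fin.last n) (1 : ℤ)) ∧
    (∀ w : Fin (n + 1) → ℤ,
      w ∈ AddSubmonoid.closure
        {w' : Fin (n + 1) → ℤ | (∃ i : Fin n, w' = Pi.single i.castSucc 1) ∨
          ∃ i : Fin n, w' = Pi.single (Fin.last n) 1 - Pi.single i.castSucc 1}
      ↔ (fun i => (w i : ℝ)) ∈ dualCone (coneGen (hcVerts n))) := by
  refine ⟨IsNonnegOnHypercube.zero_le_last_add_sum_neg hu, ?_,
    fun w => ⟨fun hw => ?_, fun hw => ?_⟩⟩
  · simpa only [not_lt] using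
      eq_sum_smul_single_add_sum_smul_sub_single u (fun i => u i.castSucc < 0)
  · exact closure_hypercubeDualGenerators_le n hw
  · exact (IsNonnegOnHypercube.of_intCast_mem_dualCone hw).mem_closure_hypercubeDualGenerators hn
end

section
/- Let a be a nonzero integer and let (a_0,…,a_k) be a sequence of integers with each a_j ∈ {0, a, −a}. Then (a_0,…,a_k) is a-admissible — i.e. Σ_{j=0}^{k} a_j = a and |a_s + a_{s+1} + ⋯ + a_u| ≤ |a| for all 0 ≤ s ≤ u ≤ k — if and only if the subsequence of its nonzero entries is nonempty, the entries of this subsequence alternate between the values a and −a, and its first and last entries are both equal to a. -/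
/-!
The interval sums of a sequence are differences of its prefix sums `S 0 = 0, …, S (k + 1) = a`,
all of which are multiples of `a`. Bounding the sums over `[0, n)` and `[n, k]` by `|a|` forces
each `S n` into `{0, a}`, and conversely prefix sums in `{0, a}` have differences at most `|a|`.
Prefix sums confined to `{0, a}` mean precisely that every nonzero entry moves the running sum to
the other level, i.e. the nonzero entries read `a, -a, a, …`; the total being `a` says that the
last of them is `a`.
-/

open Finset

theorem sum_Icc_eq_sum_take_sub_sum_take {M : Type*} [AddCommGroup M] {n : ℕ} (f : Fin n → M)
    {s u : Fin n} (h : s ≤ u) :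
    ∑ j ∈ Icc s u, f j = ((List.ofFn f).take (u + 1)).sum - ((List.ofFn f).take s).sum := by
  rw [List.sum_take_ofFn, List.sum_take_ofFn, eq_sub_iff_add_eq, ← sum_union]
  · congr 1
    ext j
    simp only [mem_union, mem_Icc, mem_filter, mem_univ, true_and, Fin.le_def]
    omega
  · refine Finset.disjoint_left.2 fun j hj hj' => ?_
    simp only [mem_Icc, mem_filter, mem_univ, true_and, Fin.le_def] at hj hj'
    omega

theorem forall_abs_sum_Icc_le_iff {M : Type*} [AddCommGroup M] [LinearOrder M]
    [IsOrderedAddMonoid M] {n : ℕ} (f : Fin n → M) {b : M} (hb : 0 ≤ b) :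
    (∀ s u : Fin n, s ≤ u → |∑ j ∈ Icc s u, f j| ≤ b) ↔
      ∀ i j, i ≤ j → j ≤ n → |((List.ofFn f).take j).sum - ((List.ofFn f).take i).sum| ≤ b := by
  constructor
  · intro h i j hij hj
    rcases hij.eq_or_lt with rfl | hij
    · simpa using hb
    have := h ⟨i, by omega⟩ ⟨j - 1, by omega⟩ (Fin.le_def.2 (by simp; omega))
    rwa [sum_Icc_eq_sum_take_sub_sum_take f (Fin.le_def.2 (by simp; omega)),
      Nat.sub_add_cancel (by omega)] at this
  · intro h s u hsu
    rw [sum_Icc_eq_sum_take_sub_sum_take f hsu]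
    exact h s (u + 1) (by rw [Fin.le_def] at hsu; omega) u.isLt

theorem List.forall_prefix_iff_forall_take {α : Type*} {P : List α → Prop} {l : List α} :
    (∀ p, p <+: l → P p) ↔ ∀ n ≤ l.length, P (l.take n) := by
  refine ⟨fun h n _ => h _ (l.take_prefix n), fun h p hp => ?_⟩
  rw [List.prefix_iff_eq_take.1 hp]
  exact h _ hp.length_le

theorem List.IsChain.two_nsmul_sum_eq {G : Type*} [AddCommGroup G] {b : G} {g : List G}
    (h : (b :: g).IsChain fun x y => y = -x) :
    2 • g.sum = (b :: g).getLast (List.cons_ne_nil b g) - b := by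
  induction g generalizing b with
  | nil => simp
  | cons x t ih =>
    obtain ⟨hx, h⟩ := List.isChain_cons_cons.1 h
    rw [List.sum_cons, smul_add, ih h, List.getLast_cons_cons, hx]
    abel

theorem Int.eq_zero_or_eq_of_dvd_of_abs_le {a x : ℤ} (hx : a ∣ x) (h₀ : |x| ≤ |a|)
    (h₁ : |a - x| ≤ |a|) : x = 0 ∨ x = a := by
  obtain ⟨k, rfl⟩ := hx
  rcases eq_or_ne a 0 with rfl | ha
  · simp
  have ha' : 0 < |a| := abs_pos.2 ha
  have hk₀ : |k| ≤ 1 := by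
    rw [abs_mul] at h₀
    exact (mul_le_iff_le_one_right ha').1 h₀
  have hk₁ : |1 - k| ≤ 1 := by
    rw [← mul_one_sub, abs_mul] at h₁
    exact (mul_le_iff_le_one_right ha').1 h₁
  rw [abs_le] at hk₀ hk₁
  rcases (by omega : k = 0 ∨ k = 1) with rfl | rfl <;> simp

theorem forall_abs_sub_le_iff_forall_eq_zero_or_eq {S : ℕ → ℤ} {a : ℤ} {N : ℕ} (h₀ : S 0 = 0)
    (hN : S N = a) (hdvd : ∀ n, a ∣ S n) :
    (∀ i j, i ≤ j → j ≤ N → |S j - S i| ≤ |a|) ↔ ∀ n ≤ N, S n = 0 ∨ S n = a := by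
  constructor
  · intro h n hn
    refine Int.eq_zero_or_eq_of_dvd_of_abs_le (hdvd n) ?_ ?_
    · simpa [h₀] using h 0 n n.zero_le hn
    · simpa [hN] using h n N hn le_rfl
  · intro h i j hij hj
    rcases h i (hij.trans hj) with hi | hi <;> rcases h j hj with hj | hj <;> simp [hi, hj]

theorem List.sum_filter_ne_zero (l : List ℤ) : (l.filter fun x => decide (x ≠ 0)).sum = l.sum :=
  (congrArg List.sum (List.filter_congr fun x _ => by by_cases hx : x = 0 <;> simp [hx])).trans
    (List.sum_filter_bne_zero l)

/- The running sum `c` sits at one of the two levels `0`, `a`; the next nonzero entry has to be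
`a - 2 * c`, which moves it to the other level. Prepending `2 * c - a` turns this requirement
into the chain condition. -/
theorem forall_prefix_sum_iff_isChain {a c : ℤ} (hc : c = 0 ∨ c = a) {l : List ℤ}
    (hl : ∀ x ∈ l, x = 0 ∨ x = a ∨ x = -a) :
    (∀ p, p <+: l → c + p.sum = 0 ∨ c + p.sum = a) ↔
      ((2 * c - a) :: l.filter fun x => decide (x ≠ 0)).IsChain fun x y => y = -x := by
  induction l generalizing c with
  | nil => simp [hc]
  | cons x t ih =>
    have hx := hl x List.mem_cons_self
    have ht := fun y hy => hl y (List.mem_cons_of_mem x hy)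
    have hprefix : (∀ p, p <+: x :: t → c + p.sum = 0 ∨ c + p.sum = a) ↔
        ∀ q, q <+: t → c + x + q.sum = 0 ∨ c + x + q.sum = a := by
      simp [List.prefix_cons_iff, or_imp, forall_and, hc, add_assoc,
        forall_comm (α := List ℤ) (β := List ℤ)]
    rw [hprefix]
    by_cases hx0 : x = 0
    · subst hx0
      simpa using ih hc ht
    rw [List.filter_cons_of_pos (by simpa using hx0), List.isChain_cons_cons]
    constructor
    · intro h
      have hcx : x = -(2 * c - a) := by
        have := h [] List.nil_prefix
        simp only [List.sum_nil, add_zero] at this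
        omega
      refine ⟨hcx, ?_⟩
      convert (ih (c := c + x) (by omega) ht).1 h using 3
      omega
    · rintro ⟨hcx, hchain⟩
      refine (ih (by omega) ht).2 ?_
      convert hchain using 3
      omega

theorem isChain_neg_cons_and_sum_eq_iff {a : ℤ} (ha : a ≠ 0) {g : List ℤ} :
    ((-a :: g).IsChain (fun x y => y = -x) ∧ g.sum = a) ↔
      g ≠ [] ∧ g.IsChain (fun x y => y = -x) ∧ g.head? = some a ∧ g.getLast? = some a := by
  constructor
  · rintro ⟨h, hsum⟩
    have key := h.two_nsmul_sum_eq
    obtain ⟨hhead, hchain⟩ := List.isChain_cons.1 h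
    cases g with
    | nil => exact absurd (by simpa using hsum.symm) ha
    | cons y t =>
      rw [List.getLast_cons_cons, hsum, two_nsmul] at key
      refine ⟨List.cons_ne_nil _ _, hchain, by simpa using hhead, ?_⟩
      rw [List.getLast?_eq_some_getLast (List.cons_ne_nil _ _)]
      congr 1
      omega
  · rintro ⟨hne, hchain, hhead, hlast⟩
    have h : (-a :: g).IsChain (fun x y => y = -x) :=
      List.isChain_cons.2 ⟨by simp [hhead], hchain⟩
    refine ⟨h, ?_⟩
    have key := h.two_nsmul_sum_eq
    obtain ⟨y, t, rfl⟩ := List.exists_cons_of_ne_nil hne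
    rw [List.getLast_cons_cons, two_nsmul] at key
    rw [List.getLast?_eq_some_getLast (List.cons_ne_nil _ _)] at hlast
    have := Option.some.inj hlast
    omega

theorem admissible_iff_alternating (a : ℤ) (ha : a ≠ 0)
    (m : ℕ) (f : Fin (m + 1) → ℤ)
    (hf : ∀ j, f j = 0 ∨ f j = a ∨ f j = -a) :
    ((∑ j, f j = a) ∧
      ∀ s u : Fin (m + 1), s ≤ u → |∑ j ∈ Finset.Icc s u, f j| ≤ |a|)
    ↔ (((List.ofFn f).filter fun x => decide (x ≠ 0)) ≠ [] ∧
        List.Chain' (fun x y => y = -x) ((List.ofFn f).filter fun x => decide (x ≠ 0)) ∧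
        ((List.ofFn f).filter fun x => decide (x ≠ 0)).head? = some a ∧
        ((List.ofFn f).filter fun x => decide (x ≠ 0)).getLast? = some a) := by
  refine Iff.trans ?_ (isChain_neg_cons_and_sum_eq_iff ha)
  have hl : ∀ x ∈ List.ofFn f, x = 0 ∨ x = a ∨ x = -a := List.forall_mem_ofFn_iff.2 hf
  have hdvd : ∀ n, a ∣ ((List.ofFn f).take n).sum := fun n => List.dvd_sum fun x hx => by
    rcases hl x (List.mem_of_mem_take hx) with h | h | h <;> simp [h]
  rw [← List.sum_ofFn, forall_abs_sum_Icc_le_iff f (abs_nonneg a), List.sum_filter_ne_zero,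
    and_comm (b := _ = a)]
  refine and_congr_right fun hsum => ?_
  rw [forall_abs_sub_le_iff_forall_eq_zero_or_eq (S := fun n => ((List.ofFn f).take n).sum)
    (N := m + 1) (by simp) (by rw [List.take_of_length_le (by simp)]; exact hsum) hdvd]
  simpa [List.forall_prefix_iff_forall_take] using
    forall_prefix_sum_iff_isChain (c := 0) (Or.inl rfl) hl
end

section
/- Let Γ be a graph, μ a polarization on Γ, and D a divisor on Γ. For all subsets V, W ⊆ V(Γ): β_D(V∪W) + β_D(V∩W) = β_D(V) + β_D(W) − |E(V,W)|, where E(V,W) is the set of edges of Γ joining a vertex of V∖W to a vertex of W∖V. In particular, β_D(V) + β_D(V^c) = δ_V for every V ⊆ V(Γ), where V^c = V(Γ)∖V. -/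
open Finset

lemma card_filter_real {E : Type} [Fintype E] (p : E → Prop) [DecidablePred p] :
    ((Finset.univ.filter p).card : ℝ) = ∑ e : E, if p e then (1:ℝ) else 0 := by
  rw [Finset.card_filter]
  push_cast
  rfl

theorem beta_additivity
    {V E : Type} [Fintype V] [Fintype E] [DecidableEq V]
    (s t : E → V) (d : ℤ)
    (mu : V → ℝ) (hmu : ∑ v, mu v = (d : ℝ))
    (D : V → ℤ) (hD : ∑ v, D v = d)
    (Vs Ws : Finset V) :
    (betaInv s t mu D (Vs ∪ Ws) + betaInv s t mu D (Vs ∩ Ws)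
      = betaInv s t mu D Vs + betaInv s t mu D Ws
        - ((Finset.univ.filter fun e : E =>
            (s e ∈ Vs \ Ws ∧ t e ∈ Ws \ Vs) ∨ (s e ∈ Ws \ Vs ∧ t e ∈ Vs \ Ws)).card : ℝ)) ∧
    ∀ U : Finset V,
      betaInv s t mu D U + betaInv s t mu D Uᶜ = (edgeCut s t U : ℝ) := by
  constructor
  · have hsum : ∀ f : V → ℝ, (∑ v ∈ Vs ∪ Ws, f v) + ∑ v ∈ Vs ∩ Ws, f v
        = (∑ v ∈ Vs, f v) + ∑ v ∈ Ws, f v := fun f =>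
      Finset.sum_union_inter
    have hcut : (edgeCut s t (Vs ∪ Ws) : ℝ) + (edgeCut s t (Vs ∩ Ws) : ℝ)
        = (edgeCut s t Vs : ℝ) + (edgeCut s t Ws : ℝ)
          - 2 * ((Finset.univ.filter fun e : E =>
            (s e ∈ Vs \ Ws ∧ t e ∈ Ws \ Vs) ∨ (s e ∈ Ws \ Vs ∧ t e ∈ Vs \ Ws)).card : ℝ) := by
      simp only [edgeCut, card_filter_real, ← Finset.sum_add_distrib, ← Finset.sum_sub_distrib,
        Finset.mul_sum]
      apply Finset.sum_congr rfl
      intro e _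
      by_cases h1 : s e ∈ Vs <;> by_cases h2 : s e ∈ Ws <;>
        by_cases h3 : t e ∈ Vs <;> by_cases h4 : t e ∈ Ws <;>
        simp [h1, h2, h3, h4] <;> ring
    have hA := hsum (fun v => (D v : ℝ))
    have hB := hsum mu
    simp only [betaInv]
    linarith
  · intro U
    have h1 : (∑ v ∈ U, (D v : ℝ)) + ∑ v ∈ Uᶜ, (D v : ℝ) = (d : ℝ) := by
      rw [Finset.sum_add_sum_compl]
      exact_mod_cast congrArg Int.cast hD
    have h2 : (∑ v ∈ U, mu v) + ∑ v ∈ Uᶜ, mu v = (d : ℝ) := by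
      rw [Finset.sum_add_sum_compl]; exact hmu
    have h3 : edgeCut s t Uᶜ = edgeCut s t U := by
      unfold edgeCut
      congr 1
      apply Finset.filter_congr
      intro e _
      simp [Finset.mem_compl]
      tauto
    simp only [betaInv, h3]
    have := h1
    linarith
end

section
/- Let Γ be a graph, μ a polarization on Γ, D a divisor on Γ, and S ⊆ V(Γ). If A, B ⊆ S both attain the minimum of β_D over all subsets of S, then β_D(A∪B) and β_D(A∩B) also equal this minimum. Consequently, there is a unique inclusion-wise maximal subset of S at which β_D attains its minimum over subsets of S. -/
open Finset

lemma edgeCut_submod {V E : Type} [Fintype E] [DecidableEq V] (s t : E → V)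
    (A B : Finset V) :
    edgeCut s t (A ∪ B) + edgeCut s t (A ∩ B) ≤ edgeCut s t A + edgeCut s t B := by
  classical
  simp only [edgeCut, Finset.card_filter]
  rw [← Finset.sum_add_distrib, ← Finset.sum_add_distrib]
  apply Finset.sum_le_sum
  intro e _
  by_cases h1 : s e ∈ A <;> by_cases h2 : s e ∈ B <;> by_cases h3 : t e ∈ A <;>
    by_cases h4 : t e ∈ B <;>
    simp [Finset.mem_union, Finset.mem_inter, h1, h2, h3, h4]

lemma betaInv_submod {V E : Type} [Fintype E] [DecidableEq V]
    (s t : E → V) (mu : V → ℝ) (D : V → ℤ) (A B : Finset V) :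
    betaInv s t mu D (A ∪ B) + betaInv s t mu D (A ∩ B) ≤
      betaInv s t mu D A + betaInv s t mu D B := by
  have h1 := Finset.sum_union_inter (s₁ := A) (s₂ := B) (f := fun v => (D v : ℝ))
  have h2 := Finset.sum_union_inter (s₁ := A) (s₂ := B) (f := mu)
  have h3 := edgeCut_submod s t A B
  have h3' : (edgeCut s t (A ∪ B) : ℝ) + edgeCut s t (A ∩ B) ≤
      (edgeCut s t A : ℝ) + edgeCut s t B := by exact_mod_cast h3
  simp only [betaInv]
  linarith

theorem beta_minimizers_union_inter
    {V E : Type} [Fintype V] [Fintype E] [DecidableEq V]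
    (s t : E → V) (mu : V → ℝ) (D : V → ℤ)
    (S A B : Finset V) (hA : A ⊆ S) (hB : B ⊆ S)
    (hAmin : ∀ W ⊆ S, betaInv s t mu D A ≤ betaInv s t mu D W)
    (hBmin : ∀ W ⊆ S, betaInv s t mu D B ≤ betaInv s t mu D W) :
    (betaInv s t mu D (A ∪ B) = betaInv s t mu D A ∧
      betaInv s t mu D (A ∩ B) = betaInv s t mu D A) ∧
    ∃! M : Finset V, M ⊆ S ∧ (∀ W ⊆ S, betaInv s t mu D M ≤ betaInv s t mu D W) ∧
      ∀ W ⊆ S, (∀ W' ⊆ S, betaInv s t mu D W ≤ betaInv s t mu D W') → M ⊆ W → W = M := by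
  classical
  set β := betaInv s t mu D with hβ
  -- general union lemma
  have key : ∀ X Y : Finset V, X ⊆ S → Y ⊆ S →
      (∀ W ⊆ S, β X ≤ β W) → (∀ W ⊆ S, β Y ≤ β W) →
      β (X ∪ Y) = β X ∧ β (X ∩ Y) = β X := by
    intro X Y hX hY hXm hYm
    have hXY : β X = β Y := le_antisymm (hXm Y hY) (hYm X hX)
    have hU : X ∪ Y ⊆ S := Finset.union_subset hX hY
    have hI : X ∩ Y ⊆ S := (Finset.inter_subset_left).trans hX
    have h1 := hXm (X ∪ Y) hU
    have h2 := hXm (X ∩ Y) hI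
    have h3 := betaInv_submod s t mu D X Y
    constructor <;> linarith
  refine ⟨key A B hA hB hAmin hBmin, ?_⟩
  -- the family of minimizers
  set F : Finset (Finset V) := S.powerset.filter (fun W => ∀ W' ⊆ S, β W ≤ β W') with hF
  have memF : ∀ W, W ∈ F ↔ W ⊆ S ∧ ∀ W' ⊆ S, β W ≤ β W' := by
    intro W; simp [hF, Finset.mem_powerset]
  set M : Finset V := A ∪ F.sup id with hM
  have hMS : M ⊆ S := by
    apply Finset.union_subset hA
    intro v hv
    rcases Finset.mem_sup.mp hv with ⟨W, hW, hvW⟩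
    exact ((memF W).mp hW).1 hvW
  have hMmin : ∀ W ⊆ S, β M ≤ β W := by
    -- prove A ∪ G.sup id is a minimizer for all G ⊆ F
    have main : ∀ G : Finset (Finset V), G ⊆ F →
        (A ∪ G.sup id ⊆ S ∧ ∀ W ⊆ S, β (A ∪ G.sup id) ≤ β W) := by
      intro G
      induction G using Finset.cons_induction with
      | empty => simpa using ⟨hA, hAmin⟩
      | cons X G hXG ih =>
        intro hsub
        have hXF : X ∈ F := hsub (Finset.mem_cons_self _ _)
        obtain ⟨hXS, hXm⟩ := (memF X).mp hXF
        obtain ⟨ihS, ihm⟩ := ih (fun y hy => hsub (Finset.mem_cons_of_mem hy))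
        have heq : X ∪ (A ∪ G.sup id) = A ∪ (Finset.cons X G hXG).sup id := by
          rw [Finset.sup_cons]
          ext v; simp [Finset.mem_union]; tauto
        have := key X (A ∪ G.sup id) hXS ihS hXm ihm
        have hUS : A ∪ (Finset.cons X G hXG).sup id ⊆ S := by
          rw [← heq]; exact Finset.union_subset hXS ihS
        refine ⟨hUS, fun W hW => ?_⟩
        rw [← heq, this.1]
        exact hXm W hW
    have := main F (le_refl F)
    simpa [← hM] using this.2
  have hsubM : ∀ W ⊆ S, (∀ W' ⊆ S, β W ≤ β W') → W ⊆ M := by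
    intro W hWS hWm
    have : W ∈ F := (memF W).mpr ⟨hWS, hWm⟩
    exact (Finset.le_sup (f := id) this).trans Finset.subset_union_right
  refine ⟨M, ⟨hMS, hMmin, fun W hWS hWm hMW => le_antisymm (hsubM W hWS hWm) hMW⟩, ?_⟩
  rintro M' ⟨hM'S, hM'min, hM'max⟩
  have hUS : M' ∪ M ⊆ S := Finset.union_subset hM'S hMS
  have hUmin : ∀ W ⊆ S, β (M' ∪ M) ≤ β W := by
    intro W hW
    have := key M' M hM'S hMS hM'min hMmin
    rw [this.1]; exact hM'min W hW
  have e1 : M' ∪ M = M' := hM'max (M' ∪ M) hUS hUmin Finset.subset_union_left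
  have hMsub : M ⊆ M' := by rw [← e1]; exact Finset.subset_union_right
  exact le_antisymm (hsubM M' hM'S hM'min) hMsub
end

section
/- Let Γ be a connected graph, v0 ∈ V(Γ), and μ a polarization of degree d on Γ. Then every divisor of degree d on Γ is equivalent to exactly one (v0,μ)-quasistable divisor: there exists a (v0,μ)-quasistable divisor D' with D − D' ∈ Prin(Γ), and it is unique. -/
open Finset

/-- The Laplacian `∂(δ(M))` of a `0`-chain `M`. -/
def graphLap {V E : Type} [Fintype E] [DecidableEq V]
    (s t : E → V) (M : V → ℤ) (v : V) : ℤ :=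
  ∑ e : E, (M (t e) - M (s e)) *
    ((if t e = v then 1 else 0) - (if s e = v then 1 else 0))

namespace QSAux

set_option linter.unusedSectionVars false

variable {V E : Type} [Fintype V] [Fintype E] [DecidableEq V]

def chi (W : Finset V) : V → ℤ := fun v => if v ∈ W then 1 else 0

lemma lap_pair (s t : E → V) (N M : V → ℤ) :
    ∑ v, N v * graphLap s t M v = ∑ e, (M (t e) - M (s e)) * (N (t e) - N (s e)) := by
  unfold graphLap
  simp only [Finset.mul_sum]
  rw [Finset.sum_comm]
  refine Finset.sum_congr rfl fun e _ => ?_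
  have h1 : ∀ a : V, (∑ v, N v * (if a = v then (1:ℤ) else 0)) = N a := fun a => by
    simp [mul_ite]
  calc ∑ v, N v * ((M (t e) - M (s e)) * ((if t e = v then 1 else 0) - (if s e = v then 1 else 0)))
      = (M (t e) - M (s e)) * ((∑ v, N v * (if t e = v then 1 else 0)) - ∑ v, N v * (if s e = v then 1 else 0)) := by
        conv_rhs => rw [mul_sub, Finset.mul_sum, Finset.mul_sum, ← Finset.sum_sub_distrib]
        exact Finset.sum_congr rfl fun v _ => by ring
    _ = _ := by rw [h1, h1]

lemma lap_sum_zero (s t : E → V) (M : V → ℤ) : ∑ v, graphLap s t M v = 0 := by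
  have := lap_pair s t (fun _ => 1) M
  simpa using this

lemma sum_lap_filter (s t : E → V) (M : V → ℤ) (W : Finset V) :
    ∑ v ∈ W, graphLap s t M v = ∑ e, (M (t e) - M (s e)) * (chi W (t e) - chi W (s e)) := by
  rw [← lap_pair s t (chi W) M]
  have : ∑ v, chi W v * graphLap s t M v = ∑ v ∈ W, graphLap s t M v := by
    simp [chi, ite_mul, Finset.sum_ite_mem]
  rw [this]

lemma edgeCut_int (s t : E → V) (W : Finset V) :
    (edgeCut s t W : ℤ) = ∑ e, if (s e ∈ W ∧ t e ∉ W) ∨ (s e ∉ W ∧ t e ∈ W) then 1 else 0 := by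
  unfold edgeCut
  rw [Finset.card_filter]
  push_cast
  simp [apply_ite]

lemma qe_chi_aux (s t : E → V) (W : Finset V) (e : E) :
    (chi W (t e) - chi W (s e))^2 = if (s e ∈ W ∧ t e ∉ W) ∨ (s e ∉ W ∧ t e ∈ W) then 1 else 0 := by
  unfold chi
  by_cases h1 : s e ∈ W <;> by_cases h2 : t e ∈ W <;> simp [h1, h2]

lemma edgeCut_compl (s t : E → V) (W : Finset V) :
    edgeCut s t (univ \ W) = edgeCut s t W := by
  unfold edgeCut
  congr 1
  apply Finset.filter_congr
  intro e _
  simp only [Finset.mem_sdiff, Finset.mem_univ, true_and]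
  tauto


lemma exists_crossing (s t : E → V) (hconn : GraphConnected s t)
    (W : Finset V) (hne : W.Nonempty) (hproper : W ≠ univ) :
    ∃ e, (s e ∈ W ∧ t e ∉ W) ∨ (s e ∉ W ∧ t e ∈ W) := by
  obtain ⟨v, hv⟩ := hne
  have : ∃ w, w ∉ W := by
    by_contra h
    push_neg at h
    exact hproper (Finset.eq_univ_iff_forall.mpr h)
  obtain ⟨w, hw⟩ := this
  have hchain := hconn v w
  clear hproper
  induction hchain with
  | refl => exact absurd hv hw
  | @tail b c hab hbc ih =>
    obtain ⟨e, he⟩ := hbc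
    by_cases hb : b ∈ W
    · rcases he with ⟨h1, h2⟩ | ⟨h1, h2⟩
      · exact ⟨e, Or.inl ⟨h1 ▸ hb, h2 ▸ hw⟩⟩
      · exact ⟨e, Or.inr ⟨h1 ▸ hw, h2 ▸ hb⟩⟩
    · exact ih hb

lemma edgeCut_pos (s t : E → V) (hconn : GraphConnected s t)
    (W : Finset V) (hne : W.Nonempty) (hproper : W ≠ univ) :
    1 ≤ edgeCut s t W := by
  obtain ⟨e, he⟩ := exists_crossing s t hconn W hne hproper
  have : e ∈ (Finset.univ.filter fun e : E =>
      (s e ∈ W ∧ t e ∉ W) ∨ (s e ∉ W ∧ t e ∈ W)) := by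
    simp [he]
  exact Finset.card_pos.mpr ⟨e, this⟩ 

lemma spread_le (s t : E → V) (hconn : GraphConnected s t) (M : V → ℤ) (v w : V) :
    M v - M w ≤ ∑ e, |M (t e) - M (s e)| := by
  obtain ⟨vmx, -, hmx⟩ := Finset.exists_max_image univ M ⟨v, mem_univ v⟩
  obtain ⟨vmn, -, hmn⟩ := Finset.exists_min_image univ M ⟨v, mem_univ v⟩
  have key : Finset.Ico (M vmn) (M vmx) ⊆
      univ.biUnion (fun e => Finset.Ico (min (M (s e)) (M (t e))) (max (M (s e)) (M (t e)))) := by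
    intro k hk
    rw [Finset.mem_Ico] at hk
    set W := univ.filter (fun u => M u ≤ k) with hWdef
    have hWv : vmn ∈ W := by simp [hWdef, hk.1]
    have hWx : vmx ∉ W := by simp [hWdef]; omega
    have hproper : W ≠ univ := fun h => hWx (h ▸ mem_univ vmx)
    obtain ⟨e, he⟩ := exists_crossing s t hconn W ⟨vmn, hWv⟩ hproper
    rw [Finset.mem_biUnion]
    refine ⟨e, mem_univ e, ?_⟩
    rw [Finset.mem_Ico]
    rcases he with ⟨h1, h2⟩ | ⟨h1, h2⟩ <;>
      simp [hWdef, Finset.mem_filter] at h1 h2 <;>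
      constructor <;> [skip; skip; skip; skip] <;> omega
  have hcard : (Finset.Ico (M vmn) (M vmx)).card ≤
      ∑ e, (Finset.Ico (min (M (s e)) (M (t e))) (max (M (s e)) (M (t e)))).card :=
    le_trans (Finset.card_le_card key) (Finset.card_biUnion_le)
  have h1 : M v - M w ≤ M vmx - M vmn := by
    have := hmx v (mem_univ v); have := hmn w (mem_univ w); omega
  have h2 : M vmx - M vmn ≤ ∑ e, |M (t e) - M (s e)| := by
    have hc1 : ((Finset.Ico (M vmn) (M vmx)).card : ℤ) = M vmx - M vmn := by
      rw [Int.card_Ico, Int.toNat_sub_of_le (hmn vmx (mem_univ vmx))]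
    calc M vmx - M vmn = ((Finset.Ico (M vmn) (M vmx)).card : ℤ) := hc1.symm
      _ ≤ (∑ e, (Finset.Ico (min (M (s e)) (M (t e))) (max (M (s e)) (M (t e)))).card : ℕ) := by
          exact_mod_cast hcard
      _ = ∑ e, |M (t e) - M (s e)| := by
          push_cast
          refine Finset.sum_congr rfl fun e _ => ?_
          rw [Int.card_Ico, Int.toNat_sub_of_le (min_le_max)]
          push_cast [← max_sub_min_eq_abs]
          ring
  omega

def qe (s t : E → V) (M : V → ℤ) : ℤ := ∑ e, (M (t e) - M (s e))^2

def lin (mu : V → ℝ) (D : V → ℤ) (M : V → ℤ) : ℝ := ∑ v, ((D v : ℝ) - mu v) * (M v : ℝ)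

noncomputable def fE (s t : E → V) (mu : V → ℝ) (D : V → ℤ) (M : V → ℤ) : ℝ :=
  (qe s t M : ℝ) - 2 * lin mu D M

lemma qe_nonneg (s t : E → V) (M : V → ℤ) : 0 ≤ qe s t M :=
  Finset.sum_nonneg fun e _ => sq_nonneg _

lemma qe_chi (s t : E → V) (W : Finset V) : qe s t (chi W) = edgeCut s t W := by
  unfold qe
  rw [edgeCut_int]
  exact Finset.sum_congr rfl fun e _ => qe_chi_aux s t W e

lemma qe_neg (s t : E → V) (M : V → ℤ) : qe s t (-M) = qe s t M := by
  unfold qe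
  exact Finset.sum_congr rfl fun e _ => by simp; ring

lemma fE_zero (s t : E → V) (mu : V → ℝ) (D : V → ℤ) : fE s t mu D 0 = 0 := by
  simp [fE, qe, lin]

lemma fE_const (s t : E → V) (mu : V → ℝ) (D : V → ℤ)
    (hmd : ∑ v, ((D v : ℝ) - mu v) = 0) (M : V → ℤ) (c : ℤ) :
    fE s t mu D (fun v => M v + c) = fE s t mu D M := by
  unfold fE qe lin
  have h1 : ∀ e : E, (M (t e) + c - (M (s e) + c))^2 = (M (t e) - M (s e))^2 := fun e => by ring
  simp only [h1]
  have h2 : ∑ v, ((D v : ℝ) - mu v) * ((M v + c : ℤ) : ℝ)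
      = (∑ v, ((D v : ℝ) - mu v) * (M v : ℝ)) + (∑ v, ((D v : ℝ) - mu v)) * (c : ℝ) := by
    rw [Finset.sum_mul, ← Finset.sum_add_distrib]
    refine Finset.sum_congr rfl fun v _ => ?_
    push_cast
    ring
  rw [h2, hmd]
  ring

lemma fE_add (s t : E → V) (mu : V → ℝ) (D : V → ℤ) (M N : V → ℤ) :
    fE s t mu D (M + N) = fE s t mu D M + ((qe s t N : ℝ)
      - 2 * ∑ v, (((D v : ℝ) - (graphLap s t M v : ℝ)) - mu v) * (N v : ℝ)) := by
  have hb := lap_pair s t N M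
  have hZ : qe s t (M + N) = qe s t M + qe s t N + 2 * ∑ v, N v * graphLap s t M v := by
    rw [hb]
    unfold qe
    rw [Finset.mul_sum, ← Finset.sum_add_distrib, ← Finset.sum_add_distrib]
    exact Finset.sum_congr rfl fun e _ => by simp only [Pi.add_apply]; ring
  have hl : lin mu D (M + N) = lin mu D M + lin mu D N := by
    unfold lin
    rw [← Finset.sum_add_distrib]
    refine Finset.sum_congr rfl fun v _ => ?_
    simp only [Pi.add_apply]
    push_cast
    ring
  have hsplit : ∑ v, (((D v : ℝ) - (graphLap s t M v : ℝ)) - mu v) * (N v : ℝ)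
      = lin mu D N - ((∑ v, N v * graphLap s t M v : ℤ) : ℝ) := by
    unfold lin
    push_cast
    rw [← Finset.sum_sub_distrib]
    exact Finset.sum_congr rfl fun v _ => by ring
  unfold fE
  rw [hZ, hl, hsplit]
  push_cast
  ring

lemma coercive (s t : E → V) (hconn : GraphConnected s t) (mu : V → ℝ) (D : V → ℤ) (v0 : V) :
    ∃ B : ℕ, ∀ M : V → ℤ, M v0 = 0 → fE s t mu D M ≤ 0 → ∀ v, |M v| ≤ (B : ℤ) := by
  set C : ℝ := ∑ v, |(D v : ℝ) - mu v| with hC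
  have hCnn : 0 ≤ C := Finset.sum_nonneg fun v _ => abs_nonneg _
  set R : ℝ := 2 * C * (Fintype.card E) with hR
  have hRnn : 0 ≤ R := by positivity
  refine ⟨⌈R⌉₊, ?_⟩
  intro M h0 hf v
  set L := ∑ e, |M (t e) - M (s e)| with hL
  have hLnn : 0 ≤ L := Finset.sum_nonneg fun e _ => abs_nonneg _
  have hMv : ∀ u, |M u| ≤ L := by
    intro u
    have h1 := spread_le s t hconn M u v0
    have h2 := spread_le s t hconn M v0 u
    rw [h0] at h1 h2
    rw [abs_le]
    omega
  rcases eq_or_lt_of_le hLnn with hL0 | hLpos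
  · have := hMv v
    have : |M v| ≤ (0 : ℤ) := by omega
    have h3 : (0:ℤ) ≤ (⌈R⌉₊ : ℤ) := by positivity
    omega
  · -- Cauchy-Schwarz
    have hCS : L ^ 2 ≤ (Fintype.card E : ℤ) * qe s t M := by
      have h := Finset.sum_mul_sq_le_sq_mul_sq Finset.univ (fun _ : E => (1 : ℤ))
        (fun e => |M (t e) - M (s e)|)
      simp only [one_mul, one_pow, sq_abs] at h
      simpa [qe, Finset.card_univ] using h
    have hlin : lin mu D M ≤ C * L := by
      unfold lin
      rw [hC, Finset.sum_mul]
      refine Finset.sum_le_sum fun u _ => ?_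
      have h1 : ((D u : ℝ) - mu u) * (M u : ℝ) ≤ |(D u : ℝ) - mu u| * |(M u : ℝ)| := by
        calc ((D u : ℝ) - mu u) * (M u : ℝ) ≤ |((D u : ℝ) - mu u) * (M u : ℝ)| := le_abs_self _
          _ = |(D u : ℝ) - mu u| * |(M u : ℝ)| := abs_mul _ _
      refine h1.trans (mul_le_mul_of_nonneg_left ?_ (abs_nonneg _))
      have := hMv u
      calc |(M u : ℝ)| = ((|M u| : ℤ) : ℝ) := by push_cast; rfl
        _ ≤ (L : ℝ) := by exact_mod_cast this
    have hqle : (qe s t M : ℝ) ≤ 2 * (C * L) := by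
      unfold fE at hf
      linarith
    have hfinal : (L : ℝ) ≤ R := by
      have hLR : ((L : ℝ)) ^ 2 ≤ (Fintype.card E : ℝ) * (2 * (C * L)) := by
        have h1 : ((L^2 : ℤ) : ℝ) ≤ ((Fintype.card E : ℤ) : ℝ) * (qe s t M : ℝ) := by
          exact_mod_cast hCS
        push_cast at h1
        have h2 : ((Fintype.card E : ℝ)) * (qe s t M : ℝ) ≤ (Fintype.card E : ℝ) * (2 * (C * L)) :=
          mul_le_mul_of_nonneg_left hqle (by positivity)
        calc ((L:ℝ))^2 ≤ (Fintype.card E : ℝ) * (qe s t M : ℝ) := by exact_mod_cast h1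
          _ ≤ _ := h2
      have hLposR : (0 : ℝ) < (L : ℝ) := by exact_mod_cast hLpos
      have : (L : ℝ) * (L : ℝ) ≤ R * (L : ℝ) := by
        rw [hR]
        nlinarith
      exact le_of_mul_le_mul_right this hLposR
    have h1 := hMv v
    have h2 : (L : ℝ) ≤ (⌈R⌉₊ : ℝ) := hfinal.trans (Nat.le_ceil R)
    have h3 : L ≤ (⌈R⌉₊ : ℤ) := by exact_mod_cast h2
    omega

lemma exists_min (s t : E → V) (hconn : GraphConnected s t) (mu : V → ℝ) (D : V → ℤ) (v0 : V)
    (hmd : ∑ v, ((D v : ℝ) - mu v) = 0) :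
    ∃ M : V → ℤ, M v0 = 0 ∧ (∀ P : V → ℤ, fE s t mu D M ≤ fE s t mu D P) ∧
      (∀ P : V → ℤ, P v0 = 0 → fE s t mu D P = fE s t mu D M → ∑ v, P v ≤ ∑ v, M v) := by
  classical
  obtain ⟨B, hB⟩ := coercive s t hconn mu D v0
  set K : Finset (V → ℤ) := Fintype.piFinset (fun _ : V => Finset.Icc (-(B:ℤ)) (B:ℤ)) with hK
  have hmem : ∀ P : V → ℤ, P v0 = 0 → fE s t mu D P ≤ 0 → P ∈ K := by
    intro P h0 hf
    rw [hK, Fintype.mem_piFinset]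
    intro u
    rw [Finset.mem_Icc]
    have := hB P h0 hf u
    rw [abs_le] at this
    exact this
  set T : Finset (V → ℤ) := K.filter (fun P => P v0 = 0) with hT
  have h0T : (0 : V → ℤ) ∈ T := by
    rw [hT, Finset.mem_filter]
    refine ⟨?_, rfl⟩
    rw [hK, Fintype.mem_piFinset]
    intro u
    simp
  obtain ⟨M₁, hM₁T, hM₁min⟩ := T.exists_min_image (fE s t mu D) ⟨0, h0T⟩
  have hM₁0 : fE s t mu D M₁ ≤ 0 := by
    have := hM₁min 0 h0T
    rwa [fE_zero] at this
  have hglobal : ∀ P : V → ℤ, fE s t mu D M₁ ≤ fE s t mu D P := by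
    intro P
    have hP' : fE s t mu D (fun v => P v + (-(P v0))) = fE s t mu D P :=
      fE_const s t mu D hmd P (-(P v0))
    have hP'0 : (fun v => P v + (-(P v0))) v0 = 0 := by simp
    by_cases h : fE s t mu D (fun v => P v + (-(P v0))) < fE s t mu D M₁
    · exfalso
      have hin : (fun v => P v + (-(P v0))) ∈ T := by
        rw [hT, Finset.mem_filter]
        exact ⟨hmem _ hP'0 (le_of_lt (lt_of_lt_of_le h hM₁0)), hP'0⟩
      exact absurd (hM₁min _ hin) (not_le.mpr h)
    · rw [← hP']
      exact not_lt.mp h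
  set S : Finset (V → ℤ) := T.filter (fun P => fE s t mu D P = fE s t mu D M₁) with hS
  have hM₁S : M₁ ∈ S := by
    rw [hS, Finset.mem_filter]
    exact ⟨hM₁T, rfl⟩
  obtain ⟨M, hMS, hMmax⟩ := S.exists_max_image (fun P => ∑ v, P v) ⟨M₁, hM₁S⟩
  rw [hS, Finset.mem_filter] at hMS
  obtain ⟨hMT, hMf⟩ := hMS
  rw [hT, Finset.mem_filter] at hMT
  refine ⟨M, hMT.2, ?_, ?_⟩
  · intro P
    rw [hMf]
    exact hglobal P
  · intro P hP0 hPf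
    have hPf' : fE s t mu D P = fE s t mu D M₁ := hPf.trans hMf
    have hPS : P ∈ S := by
      rw [hS, Finset.mem_filter, hT, Finset.mem_filter]
      exact ⟨⟨hmem P hP0 (hPf'.le.trans hM₁0), hP0⟩, hPf'⟩
    exact hMmax P hPS

lemma betaInv_eq (s t : E → V) (mu : V → ℝ) (D' : V → ℤ) (W : Finset V) :
    betaInv s t mu D' W = (∑ v ∈ W, ((D' v : ℝ) - mu v)) + (edgeCut s t W : ℝ) / 2 := by
  unfold betaInv
  rw [Finset.sum_sub_distrib]

lemma exists_qs (s t : E → V) (hconn : GraphConnected s t) (v0 : V) (mu : V → ℝ) (D : V → ℤ)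
    (hmd : ∑ v, ((D v : ℝ) - mu v) = 0) :
    ∃ M : V → ℤ, Quasistable s t mu (fun v => D v - graphLap s t M v) v0 := by
  classical
  obtain ⟨M, hM0, hmin, hmax⟩ := exists_min s t hconn mu D v0 hmd
  refine ⟨M, ?_⟩
  set D' : V → ℤ := fun v => D v - graphLap s t M v with hD'
  set x : V → ℝ := fun v => ((D' v : ℝ) - mu v) with hx
  have hxv : ∀ v, x v = ((D v : ℝ) - (graphLap s t M v : ℝ)) - mu v := by
    intro v
    rw [hx, hD']
    push_cast
    ring
  have hvar : ∀ N : V → ℤ, 0 ≤ (qe s t N : ℝ) - 2 * ∑ v, x v * (N v : ℝ) := by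
    intro N
    have h := hmin (M + N)
    rw [fE_add] at h
    have : 0 ≤ (qe s t N : ℝ)
        - 2 * ∑ v, (((D v : ℝ) - (graphLap s t M v : ℝ)) - mu v) * (N v : ℝ) := by linarith
    simpa only [← hxv] using this
  have hpair : ∀ W : Finset V, ∑ v, x v * ((chi W v : ℤ) : ℝ) = ∑ v ∈ W, x v := by
    intro W
    have : ∀ v, x v * ((chi W v : ℤ) : ℝ) = if v ∈ W then x v else 0 := by
      intro v
      unfold chi
      by_cases h : v ∈ W <;> simp [h]
    simp only [this]
    rw [Finset.sum_ite_mem, Finset.univ_inter]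
  have htotal : ∑ v, x v = 0 := by
    have h1 : ∑ v, x v = (∑ v, ((D v : ℝ) - mu v)) - ((∑ v, graphLap s t M v : ℤ) : ℝ) := by
      push_cast
      rw [← Finset.sum_sub_distrib]
      exact Finset.sum_congr rfl fun v _ => by rw [hxv v]; push_cast; ring
    rw [h1, hmd, lap_sum_zero]
    simp
  have hlow : ∀ W : Finset V, -((edgeCut s t W : ℝ) / 2) ≤ ∑ v ∈ W, x v := by
    intro W
    have h := hvar (-(chi W))
    rw [qe_neg, qe_chi] at h
    have h2 : ∑ v, x v * (((-(chi W)) v : ℤ) : ℝ) = -∑ v ∈ W, x v := by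
      rw [← hpair W, ← Finset.sum_neg_distrib]
      refine Finset.sum_congr rfl fun v _ => ?_
      simp only [Pi.neg_apply]
      push_cast
      ring
    rw [h2] at h
    push_cast at h
    linarith
  have hhigh : ∀ W : Finset V, ∑ v ∈ W, x v ≤ (edgeCut s t W : ℝ) / 2 := by
    intro W
    have h := hvar (chi W)
    rw [qe_chi, hpair W] at h
    push_cast at h
    linarith
  intro W hW
  constructor
  · rw [betaInv_eq]
    have := hlow W
    linarith
  · intro hv0W
    rw [betaInv_eq]
    by_contra hle
    push_neg at hle
    have heq : ∑ v ∈ W, x v = -((edgeCut s t W : ℝ) / 2) := le_antisymm (by linarith) (hlow W)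
    -- complement
    set Wc : Finset V := univ \ W with hWc
    have hWcy : ∑ v ∈ Wc, x v = (edgeCut s t W : ℝ) / 2 := by
      rw [hWc, Finset.sum_sdiff_eq_sub (Finset.subset_univ W), htotal, heq]
      ring
    have hfeq : fE s t mu D (M + chi Wc) = fE s t mu D M := by
      rw [fE_add]
      have h1 : ∑ v, (((D v : ℝ) - (graphLap s t M v : ℝ)) - mu v) * ((chi Wc v : ℤ) : ℝ)
          = ∑ v ∈ Wc, x v := by
        rw [← hpair Wc]
        exact Finset.sum_congr rfl fun v _ => by rw [hxv v]
      rw [h1, hWcy, qe_chi, hWc, edgeCut_compl]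
      push_cast
      ring
    have hv0c : (M + chi Wc) v0 = 0 := by
      have : v0 ∉ Wc := by
        rw [hWc]
        simp [hv0W]
      simp [Pi.add_apply, chi, this, hM0]
    have hsum := hmax (M + chi Wc) hv0c hfeq
    have hcard : ∑ v, (M + chi Wc) v = (∑ v, M v) + (Wc.card : ℤ) := by
      simp only [Pi.add_apply]
      rw [Finset.sum_add_distrib]
      congr 1
      unfold chi
      rw [Finset.sum_ite_mem, Finset.univ_inter]
      simp
    have hWcne : Wc.Nonempty := by
      obtain ⟨u, -, hu⟩ := Finset.exists_of_ssubset hW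
      exact ⟨u, by rw [hWc]; simp [hu]⟩
    have : 1 ≤ (Wc.card : ℤ) := by exact_mod_cast Finset.card_pos.mpr hWcne
    omega

lemma lap_neg (s t : E → V) (N : V → ℤ) (v : V) :
    graphLap s t (-N) v = - graphLap s t N v := by
  unfold graphLap
  rw [← Finset.sum_neg_distrib]
  exact Finset.sum_congr rfl fun e _ => by simp only [Pi.neg_apply]; ring

lemma lap_sub (s t : E → V) (M M₂ : V → ℤ) (v : V) :
    graphLap s t (M - M₂) v = graphLap s t M v - graphLap s t M₂ v := by
  unfold graphLap
  rw [← Finset.sum_sub_distrib]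
  exact Finset.sum_congr rfl fun e _ => by simp only [Pi.sub_apply]; ring

lemma betaInv_compl (s t : E → V) (mu : V → ℝ) (D : V → ℤ)
    (hsum : ∑ v, (D v : ℝ) = ∑ v, mu v) (W : Finset V) :
    betaInv s t mu D (univ \ W) = (edgeCut s t W : ℝ) - betaInv s t mu D W := by
  rw [betaInv_eq, betaInv_eq, edgeCut_compl, Finset.sum_sdiff_eq_sub (Finset.subset_univ W)]
  have h0 : ∑ v, ((D v : ℝ) - mu v) = 0 := by
    rw [Finset.sum_sub_distrib, hsum]
    ring
  rw [h0]
  ring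

lemma keyU (s t : E → V) (mu : V → ℝ) (v0 : V) (D' D'' N : V → ℤ)
    (hsum'' : ∑ v, (D'' v : ℝ) = ∑ v, mu v)
    (hq' : Quasistable s t mu D' v0) (hq'' : Quasistable s t mu D'' v0)
    (hrel : ∀ v, D'' v = D' v + graphLap s t N v)
    (vmx : V) (hmx : ∀ w, N w ≤ N vmx)
    (hAne : univ.filter (fun v => N v = N vmx) ≠ univ)
    (hv0 : N v0 ≠ N vmx) : False := by
  classical
  set A := univ.filter (fun v => N v = N vmx) with hA
  have hmemA : ∀ u, u ∈ A ↔ N u = N vmx := fun u => by simp [hA]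
  have hkey : (edgeCut s t A : ℤ) ≤ ∑ v ∈ A, graphLap s t N v := by
    rw [sum_lap_filter, edgeCut_int]
    refine Finset.sum_le_sum fun e _ => ?_
    have h1 := hmx (t e)
    have h2 := hmx (s e)
    by_cases hte : t e ∈ A <;> by_cases hse : s e ∈ A
    · rw [if_neg (by tauto)]
      simp [chi, hte, hse]
    · have hc : (s e ∈ A ∧ t e ∉ A) ∨ (s e ∉ A ∧ t e ∈ A) := Or.inr ⟨hse, hte⟩
      rw [if_pos hc]
      have h3 : N (t e) = N vmx := (hmemA _).mp hte
      have h4 : N (s e) ≠ N vmx := fun h => hse ((hmemA _).mpr h)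
      simp only [chi, if_pos hte, if_neg hse, sub_zero, mul_one]
      omega
    · have hc : (s e ∈ A ∧ t e ∉ A) ∨ (s e ∉ A ∧ t e ∈ A) := Or.inl ⟨hse, hte⟩
      rw [if_pos hc]
      have h3 : N (s e) = N vmx := (hmemA _).mp hse
      have h4 : N (t e) ≠ N vmx := fun h => hte ((hmemA _).mpr h)
      simp only [chi, if_pos hse, if_neg hte, zero_sub, mul_neg_one]
      omega
    · rw [if_neg (by tauto)]
      simp [chi, hte, hse]
  have hbeta : betaInv s t mu D'' A
      = betaInv s t mu D' A + ((∑ v ∈ A, graphLap s t N v : ℤ) : ℝ) := by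
    rw [betaInv_eq, betaInv_eq]
    have h5 : ∑ v ∈ A, ((D'' v : ℝ) - mu v)
        = (∑ v ∈ A, ((D' v : ℝ) - mu v)) + ((∑ v ∈ A, graphLap s t N v : ℤ) : ℝ) := by
      push_cast
      rw [← Finset.sum_add_distrib]
      refine Finset.sum_congr rfl fun v _ => ?_
      rw [hrel v]
      push_cast
      ring
    rw [h5]
    ring
  have hAss : A ⊂ univ := Finset.ssubset_univ_iff.mpr hAne
  have h1 : 0 ≤ betaInv s t mu D' A := (hq' A hAss).1
  have h2 : (edgeCut s t A : ℝ) ≤ betaInv s t mu D'' A := by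
    rw [hbeta]
    have h6 : ((edgeCut s t A : ℤ) : ℝ) ≤ ((∑ v ∈ A, graphLap s t N v : ℤ) : ℝ) := by
      exact_mod_cast hkey
    push_cast at h6 ⊢
    linarith
  have h3 := betaInv_compl s t mu D'' hsum'' A
  have hvmxA : vmx ∈ A := (hmemA vmx).mpr rfl
  have h4 : univ \ A ⊂ univ := Finset.sdiff_ssubset (Finset.subset_univ A) ⟨vmx, hvmxA⟩
  have hv0c : v0 ∈ univ \ A := by
    rw [Finset.mem_sdiff]
    exact ⟨Finset.mem_univ v0, fun h => hv0 ((hmemA v0).mp h)⟩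
  have h5 := (hq'' _ h4).2 hv0c
  rw [h3] at h5
  linarith

lemma rigidity (s t : E → V) (mu : V → ℝ) (v0 : V) (D' D'' N : V → ℤ)
    (hsum' : ∑ v, (D' v : ℝ) = ∑ v, mu v)
    (hsum'' : ∑ v, (D'' v : ℝ) = ∑ v, mu v)
    (hq' : Quasistable s t mu D' v0) (hq'' : Quasistable s t mu D'' v0)
    (hrel : ∀ v, D'' v = D' v + graphLap s t N v) : ∀ v, D'' v = D' v := by
  classical
  obtain ⟨vmx, -, hmx'⟩ := Finset.exists_max_image univ N ⟨v0, Finset.mem_univ v0⟩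
  have hmx : ∀ w, N w ≤ N vmx := fun w => hmx' w (Finset.mem_univ w)
  by_cases hAuniv : univ.filter (fun v => N v = N vmx) = univ
  · have hconst : ∀ u, N u = N vmx := by
      intro u
      have : u ∈ univ.filter (fun v => N v = N vmx) := by
        rw [hAuniv]; exact Finset.mem_univ u
      simpa using this
    intro v
    have hz : graphLap s t N v = 0 := by
      unfold graphLap
      refine Finset.sum_eq_zero fun e _ => ?_
      rw [hconst (t e), hconst (s e)]
      ring
    rw [hrel v, hz]
    ring
  · exfalso
    obtain ⟨vmn, -, hmn'⟩ := Finset.exists_min_image univ N ⟨v0, Finset.mem_univ v0⟩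
    have hmn : ∀ w, N vmn ≤ N w := fun w => hmn' w (Finset.mem_univ w)
    have hne : N vmn ≠ N vmx := by
      intro h
      apply hAuniv
      apply Finset.eq_univ_iff_forall.mpr
      intro u
      simp only [Finset.mem_filter, Finset.mem_univ, true_and]
      have := hmn u
      have := hmx u
      omega
    by_cases hv0 : N v0 = N vmx
    · refine keyU s t mu v0 D'' D' (-N) hsum' hq'' hq' ?_ vmn ?_ ?_ ?_
      · intro v
        rw [lap_neg, hrel v]
        ring
      · intro w
        simp only [Pi.neg_apply, neg_le_neg_iff]
        exact hmn w
      · intro h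
        have : vmx ∈ univ.filter (fun v => (-N) v = (-N) vmn) := by
          rw [h]; exact Finset.mem_univ vmx
        simp only [Finset.mem_filter, Pi.neg_apply, neg_inj] at this
        exact hne this.2.symm
      · simp only [Pi.neg_apply, ne_eq, neg_inj]
        rw [hv0]
        exact fun h => hne h.symm
    · exact keyU s t mu v0 D' D'' N hsum'' hq' hq'' hrel vmx hmx hAuniv hv0

end QSAux

theorem exists_unique_quasistable_representative
    {V E : Type} [Fintype V] [Fintype E] [DecidableEq V]
    (s t : E → V) (hconn : GraphConnected s t)
    (v0 : V) (d : ℤ)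
    (mu : V → ℝ) (hmu : ∑ v, mu v = (d : ℝ))
    (D : V → ℤ) (hD : ∑ v, D v = d) :
    ∃! D' : V → ℤ,
      ((∑ v, D' v = d) ∧ Quasistable s t mu D' v0) ∧
      ∃ M : V → ℤ, ∀ v, D v - D' v = graphLap s t M v := by
  classical
  have hDR : ∑ v, ((D v : ℤ) : ℝ) = (d : ℝ) := by
    exact_mod_cast congrArg (Int.cast : ℤ → ℝ) hD
  have hmd : ∑ v, ((D v : ℝ) - mu v) = 0 := by
    rw [Finset.sum_sub_distrib, hDR, hmu]
    ring
  obtain ⟨M, hqs⟩ := QSAux.exists_qs s t hconn v0 mu D hmd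
  set D' : V → ℤ := fun v => D v - graphLap s t M v with hD'
  have hsum' : ∑ v, D' v = d := by
    rw [hD']
    rw [Finset.sum_sub_distrib, QSAux.lap_sum_zero, hD]
    ring
  refine ⟨D', ⟨⟨hsum', hqs⟩, ⟨M, fun v => by rw [hD']; ring⟩⟩, ?_⟩
  rintro D'' ⟨⟨hsum'', hqs''⟩, ⟨M₂, hM₂⟩⟩
  have hrel : ∀ v, D'' v = D' v + graphLap s t (M - M₂) v := by
    intro v
    have h1 := hM₂ v
    have h2 := QSAux.lap_sub s t M M₂ v
    rw [hD']
    simp only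
    omega
  have hsum'R : ∑ v, ((D' v : ℤ) : ℝ) = ∑ v, mu v := by
    rw [hmu]
    exact_mod_cast congrArg (Int.cast : ℤ → ℝ) hsum'
  have hsum''R : ∑ v, ((D'' v : ℤ) : ℝ) = ∑ v, mu v := by
    rw [hmu]
    exact_mod_cast congrArg (Int.cast : ℤ → ℝ) hsum''
  have key := QSAux.rigidity s t mu v0 D' D'' (M - M₂) hsum'R hsum''R hqs hqs'' hrel
  funext v
  exact key v
end

section
/- Let Γ be a connected graph, v0 ∈ V(Γ), and μ a polarization of degree d on Γ. Let Γ̂ be a refinement of Γ, with the induced polarization μ̂ on Γ̂ given by μ̂ = μ on V(Γ) and μ̂ = 0 at the exceptional vertices. If D is a (v0,μ̂)-quasistable divisor of degree d on Γ̂, then D(x) ∈ {0,−1} for every exceptional vertex x of Γ̂; moreover, for every edge e of Γ, D(x) = 0 for all but at most one exceptional vertex x lying over e, and if an exceptional vertex x over e has D(x) ≠ 0 then D(x) = −1. -/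
open Finset

/-- Source map of the refinement of a graph obtained by inserting `m e`
exceptional vertices in the interior of each edge `e`. -/
def refineS {V E : Type} (s : E → V) (m : E → ℕ) :
    (Σ e : E, Fin (m e + 1)) → V ⊕ (Σ e : E, Fin (m e)) :=
  fun p => if h : (p.2 : ℕ) = 0 then Sum.inl (s p.1)
    else Sum.inr ⟨p.1, ⟨(p.2 : ℕ) - 1, by have := p.2.isLt; omega⟩⟩

/-- Target map of the refinement of a graph obtained by inserting `m e`
exceptional vertices in the interior of each edge `e`. -/
def refineT {V E : Type} (t : E → V) (m : E → ℕ) :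
    (Σ e : E, Fin (m e + 1)) → V ⊕ (Σ e : E, Fin (m e)) :=
  fun p => if h : (p.2 : ℕ) = m p.1 then Sum.inl (t p.1)
    else Sum.inr ⟨p.1, ⟨(p.2 : ℕ), by have := p.2.isLt; omega⟩⟩

section Aux
variable {V E : Type} [Fintype V] [Fintype E] [DecidableEq V] [DecidableEq E]

/-- The set of exceptional vertices over `e` with index in `[a,b]`. -/
def intervalW (m : E → ℕ) (e : E) (a b : ℕ) : Finset (V ⊕ (Σ e : E, Fin (m e))) :=
  (Finset.univ.filter fun j : Fin (m e) => a ≤ j.val ∧ j.val ≤ b).image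
    fun j => Sum.inr ⟨e, j⟩

lemma inl_not_mem_intervalW {m : E → ℕ} {e : E} {a b : ℕ} (v : V) :
    (Sum.inl v : V ⊕ (Σ e : E, Fin (m e))) ∉ intervalW m e a b := by
  simp [intervalW]

lemma inr_mem_intervalW {m : E → ℕ} {e : E} {a b : ℕ} {e' : E} {j : Fin (m e')} :
    (Sum.inr ⟨e', j⟩ : V ⊕ (Σ e : E, Fin (m e))) ∈ intervalW m e a b ↔
      e' = e ∧ a ≤ (j : ℕ) ∧ (j : ℕ) ≤ b := by
  simp only [intervalW, mem_image, mem_filter, mem_univ, true_and]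
  constructor
  · rintro ⟨k, hk, hk2⟩
    rw [Sum.inr.injEq, Sigma.mk.inj_iff] at hk2
    obtain ⟨rfl, hk3⟩ := hk2
    cases hk3
    exact ⟨rfl, hk⟩
  · rintro ⟨rfl, h1, h2⟩
    exact ⟨j, ⟨h1, h2⟩, rfl⟩

lemma cut_intervalW (s t : E → V) (m : E → ℕ) (e : E) (a b : ℕ)
    (hab : a ≤ b) (hb : b < m e) :
    edgeCut (refineS s m) (refineT t m) (intervalW m e a b) = 2 := by
  classical
  have hsmem : ∀ (e' : E) (i : Fin (m e' + 1)),
      (refineS s m ⟨e', i⟩ ∈ intervalW (V := V) m e a b ↔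
        e' = e ∧ a + 1 ≤ (i : ℕ) ∧ (i : ℕ) ≤ b + 1) := by
    intro e' i
    unfold refineS
    dsimp only
    split_ifs with h
    · simp only [inl_not_mem_intervalW, false_iff]
      rintro ⟨rfl, h1, h2⟩; omega
    · rw [inr_mem_intervalW]
      simp only [Fin.val_mk]
      constructor <;> rintro ⟨rfl, h1, h2⟩ <;> exact ⟨rfl, by omega, by omega⟩
  have htmem : ∀ (e' : E) (i : Fin (m e' + 1)),
      (refineT t m ⟨e', i⟩ ∈ intervalW (V := V) m e a b ↔
        e' = e ∧ a ≤ (i : ℕ) ∧ (i : ℕ) ≤ b) := by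
    intro e' i
    unfold refineT
    dsimp only
    split_ifs with h
    · simp only [inl_not_mem_intervalW, false_iff]
      rintro ⟨rfl, h1, h2⟩; omega
    · rw [inr_mem_intervalW]
  have key : (Finset.univ.filter fun p : Σ e : E, Fin (m e + 1) =>
      (refineS s m p ∈ intervalW (V := V) m e a b ∧ refineT t m p ∉ intervalW (V := V) m e a b) ∨
      (refineS s m p ∉ intervalW (V := V) m e a b ∧ refineT t m p ∈ intervalW (V := V) m e a b))
      = {(⟨e, ⟨a, by omega⟩⟩ : Σ e : E, Fin (m e + 1)), ⟨e, ⟨b + 1, by omega⟩⟩} := by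
    ext ⟨e', i⟩
    rw [mem_filter, hsmem, htmem]
    simp only [mem_univ, true_and, mem_insert, mem_singleton, Sigma.mk.inj_iff]
    by_cases he : e' = e
    · subst he
      simp only [heq_eq_eq, Fin.ext_iff, Fin.val_mk, true_and, eq_self_iff_true]
      omega
    · simp [he]
  unfold edgeCut
  rw [key, card_insert_of_notMem, card_singleton]
  simp only [mem_singleton, Sigma.mk.inj_iff, heq_eq_eq, Fin.ext_iff, Fin.val_mk]
  rintro ⟨-, h⟩; omega

end Aux

section Aux2
variable {V E : Type} [Fintype V] [Fintype E] [DecidableEq V] [DecidableEq E]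

lemma edgeCut_compl {V E : Type} [Fintype V] [Fintype E] [DecidableEq V]
    (s t : E → V) (A : Finset V) :
    edgeCut s t (Finset.univ \ A) = edgeCut s t A := by
  unfold edgeCut
  congr 1
  ext e
  simp only [mem_filter, mem_univ, true_and, mem_sdiff]
  tauto

lemma intervalW_self (m : E → ℕ) (e : E) (j : Fin (m e)) :
    intervalW (V := V) m e j j = {Sum.inr ⟨e, j⟩} := by
  ext x
  rcases x with v | ⟨e', k⟩
  · simp [inl_not_mem_intervalW]
  · rw [inr_mem_intervalW, mem_singleton]
    by_cases he : e' = e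
    · subst he
      simp only [Sum.inr.injEq, Sigma.mk.inj_iff, heq_eq_eq, Fin.ext_iff, true_and]
      omega
    · simp [he, Sigma.mk.inj_iff]

lemma betaInv_intervalW (s t : E → V) (m : E → ℕ) (mu : V → ℝ)
    (D : V ⊕ (Σ e : E, Fin (m e)) → ℤ) (e : E) (a b : ℕ) (hab : a ≤ b) (hb : b < m e) :
    betaInv (refineS s m) (refineT t m) (Sum.elim mu fun _ => 0) D (intervalW m e a b) =
      (∑ j ∈ Finset.univ.filter (fun j : Fin (m e) => a ≤ j.val ∧ j.val ≤ b),
        (D (Sum.inr ⟨e, j⟩) : ℝ)) + 1 := by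
  have hinj : ∀ x ∈ Finset.univ.filter (fun j : Fin (m e) => a ≤ j.val ∧ j.val ≤ b),
      ∀ y ∈ Finset.univ.filter (fun j : Fin (m e) => a ≤ j.val ∧ j.val ≤ b),
      (Sum.inr ⟨e, x⟩ : V ⊕ (Σ e : E, Fin (m e))) = Sum.inr ⟨e, y⟩ → x = y := by
    intro x _ y _ h
    rw [Sum.inr.injEq, Sigma.mk.inj_iff] at h
    exact eq_of_heq h.2
  unfold betaInv
  rw [cut_intervalW s t m e a b hab hb]
  unfold intervalW
  rw [Finset.sum_image hinj, Finset.sum_image hinj]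
  simp only [Sum.elim_inr]
  rw [Finset.sum_const_zero]
  norm_num

end Aux2

theorem quasistable_on_refinement_exceptional_values
    {V E : Type} [Fintype V] [Fintype E] [DecidableEq V] [DecidableEq E]
    (s t : E → V) (hconn : GraphConnected s t)
    (m : E → ℕ) (v0 : V) (d : ℤ)
    (mu : V → ℝ) (hmu : ∑ v, mu v = (d : ℝ))
    (D : V ⊕ (Σ e : E, Fin (m e)) → ℤ) (hDdeg : ∑ x, D x = d)
    (hqs : Quasistable (refineS s m) (refineT t m)
      (Sum.elim mu fun _ => 0) D (Sum.inl v0)) :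
    (∀ (e : E) (j : Fin (m e)),
        D (Sum.inr ⟨e, j⟩) = 0 ∨ D (Sum.inr ⟨e, j⟩) = -1) ∧
    (∀ (e : E) (j j' : Fin (m e)),
        D (Sum.inr ⟨e, j⟩) ≠ 0 → D (Sum.inr ⟨e, j'⟩) ≠ 0 → j = j') ∧
    (∀ (e : E) (j : Fin (m e)),
        D (Sum.inr ⟨e, j⟩) ≠ 0 → D (Sum.inr ⟨e, j⟩) = -1) := by
  classical
  have hDsum : (∑ x, (D x : ℝ)) = (d : ℝ) := by exact_mod_cast congrArg (Int.cast : ℤ → ℝ) hDdeg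
  have hmusum : (∑ x, (Sum.elim mu fun _ => 0 : V ⊕ (Σ e : E, Fin (m e)) → ℝ) x) = (d : ℝ) := by
    rw [Fintype.sum_sum_type]
    simp [hmu]
  -- upper bound : D x ≤ 0 at exceptional vertices
  have hub : ∀ (e : E) (j : Fin (m e)), D (Sum.inr ⟨e, j⟩) ≤ 0 := by
    intro e j
    set x : V ⊕ (Σ e : E, Fin (m e)) := Sum.inr ⟨e, j⟩ with hx
    have hW : Finset.univ.erase x ⊂ Finset.univ := Finset.erase_ssubset (mem_univ x)
    have h := (hqs _ hW).2 (by simp [x])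
    have hcut : edgeCut (refineS s m) (refineT t m) (Finset.univ.erase x) = 2 := by
      rw [← Finset.sdiff_singleton_eq_erase, edgeCut_compl, ← intervalW_self m e j]
      exact cut_intervalW s t m e j j le_rfl j.isLt
    have hDsum' : ∑ v ∈ Finset.univ.erase x, (D v : ℝ) = (d : ℝ) - (D x : ℝ) := by
      rw [Finset.sum_erase_eq_sub (mem_univ x), hDsum]
    have hmusum' : ∑ v ∈ Finset.univ.erase x,
        (Sum.elim mu fun _ => 0 : V ⊕ (Σ e : E, Fin (m e)) → ℝ) v = (d : ℝ) := by
      rw [Finset.sum_erase_eq_sub (mem_univ x), hmusum]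
      simp [x]
    unfold betaInv at h
    rw [hcut, hDsum', hmusum'] at h
    norm_num at h
    have : (D x : ℝ) < 1 := by linarith
    exact_mod_cast Int.lt_add_one_iff.mp (by exact_mod_cast this)
  -- lower bound : -1 ≤ D x at exceptional vertices
  have hm1 : ∀ (e : E) (j : Fin (m e)), -1 ≤ D (Sum.inr ⟨e, j⟩) := by
    intro e j
    have hW : intervalW (V := V) m e j j ⊂ Finset.univ := by
      rw [Finset.ssubset_univ_iff]
      intro h
      exact inl_not_mem_intervalW (m := m) (e := e) (a := j) (b := j) v0
        (h.symm ▸ mem_univ (Sum.inl v0))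
    have h := (hqs _ hW).1
    rw [betaInv_intervalW s t m mu D e j j le_rfl j.isLt] at h
    have hfs : Finset.univ.filter (fun k : Fin (m e) => (j:ℕ) ≤ k.val ∧ k.val ≤ (j:ℕ))
        = {j} := by
      ext k
      simp only [mem_filter, mem_univ, true_and, mem_singleton, Fin.ext_iff]
      omega
    rw [hfs, Finset.sum_singleton] at h
    have : (-1 : ℝ) ≤ (D (Sum.inr ⟨e, j⟩) : ℝ) := by linarith
    exact_mod_cast this
  have part1 : ∀ (e : E) (j : Fin (m e)),
      D (Sum.inr ⟨e, j⟩) = 0 ∨ D (Sum.inr ⟨e, j⟩) = -1 := by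
    intro e j
    have := hub e j
    have := hm1 e j
    omega
  -- uniqueness helper
  have huniq : ∀ (e : E) (j j' : Fin (m e)), (j : ℕ) < (j' : ℕ) →
      D (Sum.inr ⟨e, j⟩) = -1 → D (Sum.inr ⟨e, j'⟩) = -1 → False := by
    intro e j j' hlt h1 h2
    have hW : intervalW (V := V) m e j j' ⊂ Finset.univ := by
      rw [Finset.ssubset_univ_iff]
      intro h
      exact inl_not_mem_intervalW (m := m) (e := e) (a := j) (b := j') v0
        (h.symm ▸ mem_univ (Sum.inl v0))
    have h := (hqs _ hW).1
    rw [betaInv_intervalW s t m mu D e j j' (le_of_lt hlt) j'.isLt] at h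
    set S := Finset.univ.filter (fun k : Fin (m e) => (j:ℕ) ≤ k.val ∧ k.val ≤ (j':ℕ)) with hS
    have hne : j ≠ j' := fun hh => by rw [hh] at hlt; omega
    have hsub : ({j, j'} : Finset (Fin (m e))) ⊆ S := by
      intro k hk
      rcases mem_insert.mp hk with rfl | hk
      · simp [hS]; omega
      · rw [mem_singleton] at hk
        subst hk
        simp [hS]; omega
    have hbound := Finset.sum_le_sum_of_subset_of_nonneg (f := fun k : Fin (m e) =>
        -(D (Sum.inr ⟨e, k⟩) : ℝ)) hsub (fun k _ _ => by
      have := hub e k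
      simp only [neg_nonneg]
      exact_mod_cast this)
    rw [Finset.sum_neg_distrib, Finset.sum_neg_distrib, neg_le_neg_iff,
      Finset.sum_pair hne, h1, h2] at hbound
    push_cast at hbound
    linarith
  refine ⟨part1, ?_, ?_⟩
  · intro e j j' hj hj'
    have h1 : D (Sum.inr ⟨e, j⟩) = -1 := (part1 e j).resolve_left hj
    have h2 : D (Sum.inr ⟨e, j'⟩) = -1 := (part1 e j').resolve_left hj'
    rcases Nat.lt_trichotomy (j : ℕ) (j' : ℕ) with h | h | h
    · exact absurd (huniq e j j' h h1 h2) (fun x => x)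
    · exact Fin.ext h
    · exact absurd (huniq e j' j h h2 h1) (fun x => x)
  · intro e j hj
    exact (part1 e j).resolve_left hj
end
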